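/- arXiv:2007.04468 — 10 statements merged into one kernel-verified Lean document; each statement's English description precedes it below -/
import Mathlib

section
/- Let H be a graph whose vertex set is partitioned into ℓ ≥ 1 classes V_1, …, V_ℓ, each of which induces a clique in H. Let G be the graph obtained from H by adding ℓ+1 new vertices v_0, v_1, …, v_ℓ, where for each i ∈ {1,…,ℓ} the vertex v_i is adjacent exactly to the vertices of V_i, the vertex v_0 is adjacent exactly to all vertices of H, and no other edges are added; let K = {v_0, v_1, …, v_ℓ}. Then there exists a set S with K ⊆ S ⊆ V(G) such that the induced subgraph G[S] is a tree if and only if H contains an independent set I with |I ∩ V_i| = 1 for every i ∈ {1,…,ℓ}. -/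
open SimpleGraph

/-- The graph `G` of the Multicolored Independent Set reduction: start from `H`
(whose vertex set is partitioned by `c` into `ℓ` clique classes), add `ℓ + 1`
new vertices `v_0, v_1, …, v_ℓ` (encoded as `Sum.inr j` for `j : Fin (ℓ+1)`),
where `v_i` (for `1 ≤ i ≤ ℓ`) is adjacent exactly to the class `V_i`, and `v_0`
is adjacent exactly to all of `V(H)`; no other edges are added. -/
def misReductionGraph (ℓ : ℕ) {V : Type} (H : SimpleGraph V) (c : V → Fin ℓ) :
    SimpleGraph (V ⊕ Fin (ℓ + 1)) :=
  SimpleGraph.fromRel (fun a b =>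
    match a, b with
    | Sum.inl u, Sum.inl w => H.Adj u w
    | Sum.inl u, Sum.inr j => j = 0 ∨ (j : ℕ) = (c u : ℕ) + 1
    | Sum.inr _, _ => False)

/-! If `S ⊇ K` induces a tree, then `S ∩ V(H)` is independent, since two adjacent vertices of it
would form a triangle with `v_0`, and it meets every class `V_i`, since `v_i` needs a neighbour in
the tree; as `V_i` is a clique, it meets `V_i` only once. Conversely, a multicoloured independent
set `I` makes `I ∪ K` an induced tree rooted at `v_0`: every vertex of `I` hangs from `v_0` and
every `v_i` from the vertex of `I ∩ V_i`. A graph with a parent map that strictly decreases a rank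
and accounts for every edge is a tree: on a cycle, the vertex of maximal rank would have two
distinct cycle neighbours, both equal to its parent. -/

namespace SimpleGraph

variable {W : Type*} {G : SimpleGraph W}

theorem isAcyclic_of_parent (f : W → W) (d : W → ℕ) (hd : ∀ x, f x ≠ x → d (f x) < d x)
    (hparent : ∀ ⦃x y⦄, G.Adj x y → f x = y ∨ f y = x) : G.IsAcyclic := by
  classical
  intro v p hp
  obtain ⟨m, hm, hmax⟩ := p.support.toFinset.exists_max_image d ⟨v, by simp⟩
  rw [List.mem_toFinset] at hm
  have hq : (p.rotate m hm).IsCycle := hp.rotate hm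
  have toParent : ∀ a ∈ (p.rotate m hm).support, G.Adj m a → f m = a := by
    intro a ha hma
    refine (hparent hma).resolve_right fun hfa => ?_
    have hlt : d m < d a := hfa ▸ hd a (hfa ▸ hma.ne)
    exact (hmax a (by simpa using ha)).not_gt hlt
  exact hq.snd_ne_penultimate <|
    (toParent _ (Walk.getVert_mem_support ..) (Walk.adj_snd hq.not_nil)).symm.trans
      (toParent _ (Walk.getVert_mem_support ..) (Walk.adj_penultimate hq.not_nil).symm)

theorem reachable_of_parent {r : W} (f : W → W) (d : W → ℕ)
    (hadj : ∀ x, x ≠ r → G.Adj x (f x)) (hd : ∀ x, x ≠ r → d (f x) < d x) (x : W) :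
    G.Reachable x r := by
  induction hx : d x using Nat.strong_induction_on generalizing x with
  | _ n ih =>
    by_cases hxr : x = r
    · exact hxr ▸ .rfl
    · exact (hadj x hxr).reachable.trans (ih _ (hx ▸ hd x hxr) _ rfl)

theorem isTree_of_parent {r : W} (f : W → W) (d : W → ℕ) (hfr : f r = r)
    (hadj : ∀ x, x ≠ r → G.Adj x (f x)) (hd : ∀ x, x ≠ r → d (f x) < d x)
    (hparent : ∀ ⦃x y⦄, G.Adj x y → f x = y ∨ f y = x) : G.IsTree where
  connected := (connected_iff G).2 ⟨fun x y =>
    (reachable_of_parent f d hadj hd x).trans (reachable_of_parent f d hadj hd y).symm, ⟨r⟩⟩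
  isAcyclic := isAcyclic_of_parent f d (fun x hx => hd x (by rintro rfl; exact hx hfr)) hparent

theorem isTree_induce_of_parent {s : Set W} {r : W} (hr : r ∈ s) (f : W → W) (d : W → ℕ)
    (hfs : Set.MapsTo f s s) (hfr : f r = r)
    (hadj : ∀ x ∈ s, x ≠ r → G.Adj x (f x)) (hd : ∀ x ∈ s, x ≠ r → d (f x) < d x)
    (hparent : ∀ x ∈ s, ∀ y ∈ s, G.Adj x y → f x = y ∨ f y = x) :
    (G.induce s).IsTree :=
  isTree_of_parent (r := ⟨r, hr⟩) (hfs.restrict f s s) (d ∘ Subtype.val) (Subtype.ext hfr)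
    (fun x hx => hadj x x.2 (Subtype.coe_ne_coe.2 hx))
    (fun x hx => hd x x.2 (Subtype.coe_ne_coe.2 hx))
    (fun x y hxy => by simpa [Subtype.ext_iff] using hparent x x.2 y y.2 hxy)

end SimpleGraph

section misReductionGraph

variable {ℓ : ℕ} {V : Type} {H : SimpleGraph V} {c : V → Fin ℓ}

@[simp]
lemma misReductionGraph_adj_inl_inl {u w : V} :
    (misReductionGraph ℓ H c).Adj (.inl u) (.inl w) ↔ H.Adj u w := by
  simp only [misReductionGraph, fromRel_adj, ne_eq, Sum.inl.injEq]
  exact ⟨fun ⟨_, h⟩ => h.elim id (·.symm), fun h => ⟨h.ne, .inl h⟩⟩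

@[simp]
lemma misReductionGraph_adj_inl_zero (u : V) :
    (misReductionGraph ℓ H c).Adj (.inl u) (.inr 0) := by
  simp [misReductionGraph]

@[simp]
lemma misReductionGraph_adj_inl_succ {u : V} {i : Fin ℓ} :
    (misReductionGraph ℓ H c).Adj (.inl u) (.inr i.succ) ↔ c u = i := by
  simp only [misReductionGraph, fromRel_adj, ne_eq, reduceCtorEq, not_false_eq_true, true_and,
    or_false, Fin.val_succ]
  simp [Fin.ext_iff, eq_comm]

@[simp]
lemma misReductionGraph_not_adj_inr_inr (j j' : Fin (ℓ + 1)) :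
    ¬ (misReductionGraph ℓ H c).Adj (.inr j) (.inr j') := by
  simp [misReductionGraph]

@[simp]
lemma misReductionGraph_adj_inr_inl {j : Fin (ℓ + 1)} {u : V} :
    (misReductionGraph ℓ H c).Adj (.inr j) (.inl u) ↔
      (misReductionGraph ℓ H c).Adj (.inl u) (.inr j) :=
  adj_comm ..

variable {S : Set (V ⊕ Fin (ℓ + 1))}

lemma not_adj_of_isAcyclic_induce (hS : ((misReductionGraph ℓ H c).induce S).IsAcyclic)
    (h0 : .inr 0 ∈ S) {u w : V} (hu : .inl u ∈ S) (hw : .inl w ∈ S) : ¬ H.Adj u w := by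
  classical
  exact fun huw => hS.cliqueFree le_rfl {⟨_, hu⟩, ⟨_, hw⟩, ⟨_, h0⟩}
    (is3Clique_triple_iff.2 ⟨by simpa, by simp, by simp⟩)

lemma exists_mem_class_of_connected_induce
    (hS : ((misReductionGraph ℓ H c).induce S).Connected) (h0 : .inr 0 ∈ S) {i : Fin ℓ}
    (hi : .inr i.succ ∈ S) : ∃ a, .inl a ∈ S ∧ c a = i := by
  obtain ⟨p⟩ := hS.preconnected ⟨_, hi⟩ ⟨_, h0⟩
  have hadj := p.adj_snd (p.not_nil_of_ne (by simp [Fin.succ_ne_zero]))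
  generalize p.snd = y at hadj
  obtain ⟨x | j, hx⟩ := y
  · exact ⟨x, hx, by simpa using hadj⟩
  · simp at hadj

lemma exists_transversal_of_isTree_induce (hclique : ∀ i : Fin ℓ, H.IsClique {v | c v = i})
    (hK : Set.range Sum.inr ⊆ S) (hS : ((misReductionGraph ℓ H c).induce S).IsTree) :
    ∃ I : Set V, (∀ u ∈ I, ∀ w ∈ I, ¬ H.Adj u w) ∧
      ∀ i : Fin ℓ, ∃! u, u ∈ I ∧ c u = i := by
  have hind : ∀ u ∈ {u | Sum.inl u ∈ S}, ∀ w ∈ {u | Sum.inl u ∈ S}, ¬ H.Adj u w :=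
    fun u hu w hw => not_adj_of_isAcyclic_induce hS.isAcyclic (hK ⟨0, rfl⟩) hu hw
  refine ⟨_, hind, fun i => ?_⟩
  obtain ⟨a, ha, hca⟩ :=
    exists_mem_class_of_connected_induce hS.connected (hK ⟨0, rfl⟩) (hK ⟨i.succ, rfl⟩)
  refine ⟨a, ⟨ha, hca⟩, fun w ⟨hw, hcw⟩ => ?_⟩
  by_contra hwa
  exact hind w hw a ha (hclique i hcw hca hwa)

lemma isTree_induce_of_transversal {I : Set V} (hind : ∀ u ∈ I, ∀ w ∈ I, ¬ H.Adj u w)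
    (hmeet : ∀ i : Fin ℓ, ∃! u, u ∈ I ∧ c u = i) :
    ((misReductionGraph ℓ H c).induce (Sum.inl '' I ∪ Set.range Sum.inr)).IsTree := by
  choose u hu hcu using fun i => (hmeet i).exists
  have hu_eq : ∀ a ∈ I, u (c a) = a :=
    fun a ha => (hmeet (c a)).unique ⟨hu _, hcu _⟩ ⟨ha, rfl⟩
  let parent : V ⊕ Fin (ℓ + 1) → V ⊕ Fin (ℓ + 1)
    | .inl _ => .inr 0
    | .inr j => Fin.cases (.inr 0) (fun i => .inl (u i)) j
  let depth : V ⊕ Fin (ℓ + 1) → ℕ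
    | .inl _ => 1
    | .inr j => Fin.cases 0 (fun _ => 2) j
  refine isTree_induce_of_parent (.inr ⟨0, rfl⟩) parent depth ?_ rfl ?_ ?_ ?_
  · rintro _ (⟨a, ha, rfl⟩ | ⟨j, rfl⟩)
    · exact .inr ⟨0, rfl⟩
    · cases j using Fin.cases with
      | zero => exact .inr ⟨0, rfl⟩
      | succ i => exact .inl ⟨u i, hu i, by simp [parent]⟩
  · rintro _ (⟨a, ha, rfl⟩ | ⟨j, rfl⟩) hne
    · simp [parent]
    · cases j using Fin.cases with
      | zero => exact absurd rfl hne
      | succ i => simp [parent, hcu]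
  · rintro _ (⟨a, ha, rfl⟩ | ⟨j, rfl⟩) hne
    · simp [parent, depth]
    · cases j using Fin.cases with
      | zero => exact absurd rfl hne
      | succ i => simp [parent, depth]
  have hparent_inl : ∀ a ∈ I, ∀ j, (misReductionGraph ℓ H c).Adj (.inl a) (.inr j) →
      parent (.inl a) = .inr j ∨ parent (.inr j) = .inl a := by
    intro a ha j hadj
    cases j using Fin.cases with
    | zero => exact .inl rfl
    | succ i =>
      obtain rfl : c a = i := by simpa using hadj
      exact .inr (by simp [parent, hu_eq a ha])
  rintro _ (⟨a, ha, rfl⟩ | ⟨j, rfl⟩) _ (⟨b, hb, rfl⟩ | ⟨j', rfl⟩) hadj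
  · exact absurd (by simpa using hadj) (hind a ha b hb)
  · exact hparent_inl a ha j' hadj
  · exact (hparent_inl b hb j hadj.symm).symm
  · simp at hadj

end misReductionGraph

theorem stmt0_general (ℓ : ℕ) (V : Type)
    (H : SimpleGraph V) (c : V → Fin ℓ)
    (hclique : ∀ i : Fin ℓ, H.IsClique {v | c v = i}) :
    (∃ S : Set (V ⊕ Fin (ℓ + 1)),
        Set.range Sum.inr ⊆ S ∧ ((misReductionGraph ℓ H c).induce S).IsTree) ↔
    (∃ I : Set V, (∀ u ∈ I, ∀ w ∈ I, ¬ H.Adj u w) ∧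
        ∀ i : Fin ℓ, ∃! u, u ∈ I ∧ c u = i) := by
  constructor
  · rintro ⟨S, hK, hS⟩
    exact exists_transversal_of_isTree_induce hclique hK hS
  · rintro ⟨I, hind, hmeet⟩
    exact ⟨_, Set.subset_union_right, isTree_induce_of_transversal hind hmeet⟩

/-- There is an induced tree of `G` containing all terminals `K = {v_0, …, v_ℓ}`
iff `H` has an independent set meeting every clique class exactly once. -/
theorem stmt0 (ℓ : ℕ) (hℓ : 1 ≤ ℓ) (V : Type) [Fintype V]
    (H : SimpleGraph V) (c : V → Fin ℓ)
    (hclique : ∀ i : Fin ℓ, H.IsClique {v | c v = i}) :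
    (∃ S : Set (V ⊕ Fin (ℓ + 1)),
        Set.range Sum.inr ⊆ S ∧ ((misReductionGraph ℓ H c).induce S).IsTree) ↔
    (∃ I : Set V, (∀ u ∈ I, ∀ w ∈ I, ¬ H.Adj u w) ∧
        ∀ i : Fin ℓ, ∃! u, u ∈ I ∧ c u = i) :=
  stmt0_general ℓ V H c hclique
end

section
/- Let H be a graph whose vertex set is partitioned into ℓ ≥ 1 classes V_1, …, V_ℓ, each of which induces a clique in H, and let G and K = {v_0, v_1, …, v_ℓ} be as in the Multicolored Independent Set reduction (v_i adjacent exactly to V_i for i ∈ {1,…,ℓ}, v_0 adjacent exactly to all of V(H)). Then: (1) every set S with K ⊆ S ⊆ V(G) such that G[S] is a tree satisfies that S ∩ V(H) is an independent set of H with |S ∩ V_i| = 1 for every i, and hence |S| = 2ℓ + 1; and (2) the ℓ+1 cliques {v_0}, V_1 ∪ {v_1}, …, V_ℓ ∪ {v_ℓ} partition V(G), so G admits a clique cover of size ℓ+1. -/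
/-!
Since `v_0` is adjacent to every vertex of `H`, two adjacent vertices of `S ∩ V(H)` would form a
triangle with `v_0` in the tree `G[S]`. The only neighbours of `v_{i+1}` lie in `V_i`, so
connectivity of `G[S]` (which contains `v_0 ≠ v_{i+1}`) forces `S` to meet `V_i`, and
independence together with `V_i` being a clique forces it to meet `V_i` only once. Counting gives
`|S| = ℓ + (ℓ + 1)`.
-/

open SimpleGraph

/-- The clique `Q_j` of the clique cover of `G`: `Q_0 = {v_0}`, and
`Q_{i+1} = V_i ∪ {v_{i+1}}`. -/
def misCover (ℓ : ℕ) {V : Type} (c : V → Fin ℓ) (j : Fin (ℓ + 1)) :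
    Set (V ⊕ Fin (ℓ + 1)) :=
  {w | w = Sum.inr j ∨ ∃ u : V, w = Sum.inl u ∧ (c u : ℕ) + 1 = (j : ℕ)}

namespace Set

variable {α β : Type*}

theorem encard_eq_encard_preimage_inl_add_encard_preimage_inr (s : Set (α ⊕ β)) :
    s.encard = (Sum.inl ⁻¹' s).encard + (Sum.inr ⁻¹' s).encard := by
  conv_lhs => rw [← image_preimage_inl_union_image_preimage_inr s]
  rw [encard_union_eq disjoint_image_inl_image_inr, Sum.inl_injective.encard_image,
    Sum.inr_injective.encard_image]

theorem bijOn_univ_of_existsUnique {f : α → β} {s : Set α} (h : ∀ b, ∃! a, a ∈ s ∧ f a = b) :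
    BijOn f s univ := by
  refine ⟨mapsTo_univ f s, fun a ha a' ha' hfa => ?_, fun b _ => ?_⟩
  · exact (h (f a)).unique ⟨ha, rfl⟩ ⟨ha', hfa.symm⟩
  · obtain ⟨a, ⟨ha, rfl⟩, -⟩ := h b
    exact ⟨a, ha, rfl⟩

end Set

namespace misReductionGraph

open Set

variable {ℓ : ℕ} {V : Type} {H : SimpleGraph V} {c : V → Fin ℓ}

@[simp]
theorem adj_inl_inl {u w : V} : (misReductionGraph ℓ H c).Adj (.inl u) (.inl w) ↔ H.Adj u w := by
  simp only [misReductionGraph, fromRel_adj, ne_eq, Sum.inl.injEq]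
  exact ⟨fun h => h.2.elim id fun h => h.symm, fun h => ⟨h.ne, .inl h⟩⟩

@[simp]
theorem adj_inl_inr {u : V} {j : Fin (ℓ + 1)} :
    (misReductionGraph ℓ H c).Adj (.inl u) (.inr j) ↔ j = 0 ∨ j = (c u).succ := by
  simp only [misReductionGraph, fromRel_adj, ne_eq, reduceCtorEq, not_false_eq_true, or_false,
    true_and, Fin.ext_iff, Fin.val_succ]

@[simp]
theorem adj_inr_inl {u : V} {j : Fin (ℓ + 1)} :
    (misReductionGraph ℓ H c).Adj (.inr j) (.inl u) ↔ j = 0 ∨ j = (c u).succ := by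
  rw [adj_comm, adj_inl_inr]

@[simp]
theorem not_adj_inr_inr {i j : Fin (ℓ + 1)} :
    ¬(misReductionGraph ℓ H c).Adj (.inr i) (.inr j) := by
  simp [misReductionGraph]

variable {S : Set (V ⊕ Fin (ℓ + 1))}

theorem not_adj_of_isAcyclic_induce (hK : range Sum.inr ⊆ S)
    (hS : ((misReductionGraph ℓ H c).induce S).IsAcyclic) {u w : V}
    (hu : .inl u ∈ S) (hw : .inl w ∈ S) : ¬H.Adj u w := by
  intro huw
  classical
  apply hS.cliqueFree le_rfl ({⟨_, hu⟩, ⟨_, hw⟩, ⟨.inr 0, hK ⟨0, rfl⟩⟩} : Finset S)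
  rw [is3Clique_triple_iff]
  simp [huw]

theorem exists_mem_of_preconnected_induce (hK : range Sum.inr ⊆ S)
    (hS : ((misReductionGraph ℓ H c).induce S).Preconnected) (i : Fin ℓ) :
    ∃ u, .inl u ∈ S ∧ c u = i := by
  have : Nontrivial S := ⟨⟨⟨_, hK ⟨i.succ, rfl⟩⟩, ⟨_, hK ⟨0, rfl⟩⟩, by simp⟩⟩
  obtain ⟨⟨u | j, hx⟩, hadj⟩ := hS.exists_adj_of_nontrivial ⟨_, hK ⟨i.succ, rfl⟩⟩
  · simp only [comap_adj, Function.Embedding.subtype_apply, adj_inr_inl, Fin.succ_ne_zero,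
      Fin.succ_inj, false_or] at hadj
    exact ⟨u, hx, hadj.symm⟩
  · exact (not_adj_inr_inr (H := H) (c := c) hadj).elim

theorem existsUnique_mem_of_isTree_induce (hclique : ∀ i : Fin ℓ, H.IsClique {v | c v = i})
    (hK : range Sum.inr ⊆ S) (hS : ((misReductionGraph ℓ H c).induce S).IsTree) (i : Fin ℓ) :
    ∃! u, .inl u ∈ S ∧ c u = i := by
  obtain ⟨u, hu, rfl⟩ := exists_mem_of_preconnected_induce hK hS.connected.preconnected i
  refine ⟨u, ⟨hu, rfl⟩, fun w ⟨hw, hcw⟩ => ?_⟩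
  by_contra hne
  exact not_adj_of_isAcyclic_induce hK hS.isAcyclic hw hu (hclique (c u) hcw rfl hne)

theorem ncard_eq_of_existsUnique (hK : range Sum.inr ⊆ S)
    (h : ∀ i : Fin ℓ, ∃! u, .inl u ∈ S ∧ c u = i) : S.ncard = 2 * ℓ + 1 := by
  have hinl : (Sum.inl ⁻¹' S).encard = ℓ := by
    have hbij := bijOn_univ_of_existsUnique (s := Sum.inl ⁻¹' S) h
    rw [← hbij.injOn.encard_image, hbij.image_eq, encard_univ, ENat.card_eq_coe_fintype_card,
      Fintype.card_fin]
  have hinr : Sum.inr ⁻¹' S = univ := eq_univ_of_forall fun j => hK ⟨j, rfl⟩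
  rw [ncard_def, encard_eq_encard_preimage_inl_add_encard_preimage_inr, hinl, hinr, encard_univ,
    ENat.card_eq_coe_fintype_card, Fintype.card_fin, ← Nat.cast_add, ENat.toNat_natCast]
  omega

end misReductionGraph

namespace misCover

variable {ℓ : ℕ} {V : Type} {c : V → Fin ℓ}

@[simp]
theorem inl_mem {u : V} {j : Fin (ℓ + 1)} : .inl u ∈ misCover ℓ c j ↔ (c u).succ = j := by
  simp [misCover, Fin.ext_iff]

@[simp]
theorem inr_mem {i j : Fin (ℓ + 1)} : .inr i ∈ misCover ℓ c j ↔ i = j := by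
  simp [misCover]

theorem isClique {H : SimpleGraph V} (hclique : ∀ i : Fin ℓ, H.IsClique {v | c v = i})
    (j : Fin (ℓ + 1)) : (misReductionGraph ℓ H c).IsClique (misCover ℓ c j) := by
  rintro (u | i) hu (w | i') hw hne
  · rw [inl_mem] at hu hw
    have hcw : c w = c u := Fin.succ_injective _ (hw.trans hu.symm)
    exact misReductionGraph.adj_inl_inl.2 (hclique (c u) rfl hcw (by simpa using hne))
  · simp_all
  · simp_all
  · simp_all

theorem existsUnique_mem (w : V ⊕ Fin (ℓ + 1)) : ∃! j, w ∈ misCover ℓ c j := by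
  rcases w with u | i
  · exact ⟨(c u).succ, by simp, fun j hj => (inl_mem.1 hj).symm⟩
  · exact ⟨i, by simp, fun j hj => (inr_mem.1 hj).symm⟩

end misCover

theorem stmt1_general (ℓ : ℕ) (V : Type)
    (H : SimpleGraph V) (c : V → Fin ℓ)
    (hclique : ∀ i : Fin ℓ, H.IsClique {v | c v = i}) :
    (∀ S : Set (V ⊕ Fin (ℓ + 1)),
        Set.range Sum.inr ⊆ S → ((misReductionGraph ℓ H c).induce S).IsTree →
        (∀ u, Sum.inl u ∈ S → ∀ w, Sum.inl w ∈ S → ¬ H.Adj u w) ∧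
        (∀ i : Fin ℓ, ∃! u, Sum.inl u ∈ S ∧ c u = i) ∧
        S.ncard = 2 * ℓ + 1) ∧
    ((∀ j : Fin (ℓ + 1), (misReductionGraph ℓ H c).IsClique (misCover ℓ c j)) ∧
      ∀ w : V ⊕ Fin (ℓ + 1), ∃! j : Fin (ℓ + 1), w ∈ misCover ℓ c j) := by
  refine ⟨fun S hK hS => ?_, misCover.isClique hclique, misCover.existsUnique_mem⟩
  have hunique := misReductionGraph.existsUnique_mem_of_isTree_induce hclique hK hS
  exact ⟨fun u hu w hw => misReductionGraph.not_adj_of_isAcyclic_induce hK hS.isAcyclic hu hw,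
    hunique, misReductionGraph.ncard_eq_of_existsUnique hK hunique⟩

/-- (1) Every induced tree of `G` containing all terminals `K = {v_0, …, v_ℓ}`
intersects `V(H)` in an independent set having exactly one vertex per clique
class, and hence has exactly `2ℓ + 1` vertices; and (2) the `ℓ + 1` cliques
`{v_0}, V_1 ∪ {v_1}, …, V_ℓ ∪ {v_ℓ}` partition `V(G)`. -/
theorem stmt1 (ℓ : ℕ) (hℓ : 1 ≤ ℓ) (V : Type) [Fintype V]
    (H : SimpleGraph V) (c : V → Fin ℓ)
    (hclique : ∀ i : Fin ℓ, H.IsClique {v | c v = i}) :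
    (∀ S : Set (V ⊕ Fin (ℓ + 1)),
        Set.range Sum.inr ⊆ S → ((misReductionGraph ℓ H c).induce S).IsTree →
        (∀ u, Sum.inl u ∈ S → ∀ w, Sum.inl w ∈ S → ¬ H.Adj u w) ∧
        (∀ i : Fin ℓ, ∃! u, Sum.inl u ∈ S ∧ c u = i) ∧
        S.ncard = 2 * ℓ + 1) ∧
    ((∀ j : Fin (ℓ + 1), (misReductionGraph ℓ H c).IsClique (misCover ℓ c j)) ∧
      ∀ w : V ⊕ Fin (ℓ + 1), ∃! j : Fin (ℓ + 1), w ∈ misCover ℓ c j) :=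
  stmt1_general ℓ V H c hclique
end

section
/- Let G be a graph, K ⊆ V(G), and let v be a vertex of G with degree exactly one, with unique neighbor u. Define K' = (K ∖ {v}) ∪ {u} if v ∈ K, and K' = K otherwise. Then there exists a set S with K ⊆ S ⊆ V(G) such that G[S] is a tree if and only if there exists a set S' with K' ⊆ S' ⊆ V(G) ∖ {v} such that (G − v)[S'] is a tree. -/
/-!
A leaf lies on no cycle, and on no path between two other vertices. Hence adding a leaf `v` to
a vertex set `S` that already contains its neighbour `u` changes neither the acyclicity nor
the connectedness of the induced subgraph. An induced tree containing `v` but not `u` must be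
`{v}` itself, and then `{u}` is an induced tree of `G - v` containing the new terminals.
-/

open SimpleGraph

namespace SimpleGraph

variable {V : Type*} {G : SimpleGraph V} {s : Set V} {u v x y : V}

lemma Walk.IsCycle.not_mem_support_of_subsingleton_neighborSet {c : G.Walk y y}
    (hc : c.IsCycle) (hx : (G.neighborSet x).Subsingleton) : x ∉ c.support := by
  classical
  intro hxc
  have hc' := hc.rotate hxc
  exact hc'.snd_ne_penultimate <|
    hx (Walk.adj_snd hc'.not_nil) (Walk.adj_penultimate hc'.not_nil).symm

lemma reachable_induce_iff {a b : s} :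
    (G.induce s).Reachable a b ↔
      ∃ p : G.Walk a b, p.IsPath ∧ ∀ z ∈ p.support, z ∈ s := by
  classical
  constructor
  · rintro ⟨q⟩
    obtain ⟨p, hp⟩ := q.toPath
    have hps : ∀ z ∈ (p.map (Embedding.induce (G := G) s).toHom).support, z ∈ s := by
      simp only [Walk.support_map, List.mem_map]
      rintro _ ⟨w, -, rfl⟩
      exact w.2
    exact ⟨_, hp.map (Embedding.induce (G := G) s).injective, hps⟩
  · rintro ⟨p, -, hp⟩
    exact ⟨p.induce s hp⟩

lemma isAcyclic_induce_iff :
    (G.induce s).IsAcyclic ↔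
      ∀ ⦃u⦄ (c : G.Walk u u), c.IsCycle → ¬ ∀ x ∈ c.support, x ∈ s := by
  constructor
  · intro h u c hc hcs
    refine h (c.induce s hcs) ?_
    rw [← Walk.isCycle_map_iff_of_injective (f := (Embedding.induce (G := G) s).toHom)
      (Embedding.induce (G := G) s).injective, Walk.map_induce]
    exact hc
  · rintro h ⟨u, hu⟩ c hc
    refine h (c.map (Embedding.induce (G := G) s).toHom)
      (hc.map (Embedding.induce (G := G) s).injective) ?_
    simp only [Walk.support_map, List.mem_map]
    rintro _ ⟨w, -, rfl⟩
    exact w.2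

lemma isAcyclic_induce_insert_iff (hv : (G.neighborSet v).Subsingleton) :
    (G.induce (insert v s)).IsAcyclic ↔ (G.induce s).IsAcyclic := by
  simp only [isAcyclic_induce_iff]
  refine forall₂_congr fun u c => imp_congr_right fun hc => not_congr ?_
  have hvc := hc.not_mem_support_of_subsingleton_neighborSet hv
  refine forall₂_congr fun x hx => ?_
  rw [Set.mem_insert_iff, or_iff_right (by rintro rfl; exact hvc hx)]

lemma Preconnected.induce_of_insert (hv : (G.neighborSet v).Subsingleton) (hvs : v ∉ s)
    (h : (G.induce (insert v s)).Preconnected) : (G.induce s).Preconnected := by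
  rintro ⟨x, hx⟩ ⟨y, hy⟩
  obtain ⟨p, hp, hps⟩ := reachable_induce_iff.1
    (h ⟨x, Set.mem_insert_of_mem v hx⟩ ⟨y, Set.mem_insert_of_mem v hy⟩)
  have hvp := hp.isTrail.not_mem_support_of_subsingleton_neighborSet
    (by rintro rfl; exact hvs hx) (by rintro rfl; exact hvs hy) hv
  exact reachable_induce_iff.2
    ⟨p, hp, fun z hz => (hps z hz).resolve_left (by rintro rfl; exact hvp hz)⟩

lemma Connected.induce_insert (hs : (G.induce s).Connected) (hu : u ∈ s) (hvu : G.Adj v u) :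
    (G.induce (insert v s)).Connected := by
  have hpair : insert v s = s ∪ {v, u} := by
    rw [Set.union_insert, Set.union_singleton, Set.insert_eq_of_mem hu]
  rw [hpair]
  exact connected_induce_union hs.preconnected (induce_pair_connected_of_adj hvu).preconnected
    hu (Set.mem_insert v {u}) hvu.symm

lemma eq_singleton_of_preconnected_induce (hs : (G.induce s).Preconnected) (hv : v ∈ s)
    (hvs : ∀ w ∈ s, ¬ G.Adj v w) : s = {v} := by
  refine Set.Subsingleton.eq_singleton_of_mem ?_ hv
  by_contra hnt
  have := (Set.not_subsingleton_iff.1 hnt).coe_sort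
  obtain ⟨w, hw⟩ := hs.exists_adj_of_nontrivial ⟨v, hv⟩
  exact hvs w w.2 hw

lemma isTree_induce_insert_iff (hv : G.neighborSet v = {u}) (hvs : v ∉ s) (hu : u ∈ s) :
    (G.induce (insert v s)).IsTree ↔ (G.induce s).IsTree := by
  have hleaf : (G.neighborSet v).Subsingleton := hv ▸ Set.subsingleton_singleton
  have hvu : G.Adj v u := show u ∈ G.neighborSet v from hv ▸ rfl
  have : Nonempty s := ⟨⟨u, hu⟩⟩
  rw [isTree_iff, isTree_iff, isAcyclic_induce_insert_iff hleaf]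
  exact and_congr_left' ⟨fun h => ⟨h.preconnected.induce_of_insert hleaf hvs⟩,
    fun h => h.induce_insert hu hvu⟩

end SimpleGraph

theorem stmt2_general (V : Type) (G : SimpleGraph V) (K : Set V)
    (v u : V) (hdeg : G.neighborSet v = {u}) :
    (∃ S : Set V, K ⊆ S ∧ (G.induce S).IsTree) ↔
    (∃ S' : Set V,
        {x | (x ∈ K ∧ x ≠ v) ∨ (x = u ∧ v ∈ K)} ⊆ S' ∧ v ∉ S' ∧
        (G.induce S').IsTree) := by
  have hvu : G.Adj v u := show u ∈ G.neighborSet v from hdeg ▸ rfl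
  have huv : u ≠ v := hvu.ne.symm
  constructor
  · rintro ⟨S, hKS, hS⟩
    by_cases hvS : v ∈ S
    · by_cases huS : u ∈ S
      · have hvS' : v ∉ S \ {v} := fun h => h.2 rfl
        refine ⟨S \ {v}, ?_, hvS', ?_⟩
        · rintro x (⟨hxK, hxv⟩ | ⟨rfl, -⟩)
          exacts [⟨hKS hxK, hxv⟩, ⟨huS, huv⟩]
        · rwa [← isTree_induce_insert_iff hdeg hvS' ⟨huS, huv⟩,
            Set.insert_sdiff_singleton, Set.insert_eq_of_mem hvS]
      · have hSv : S = {v} := eq_singleton_of_preconnected_induce hS.connected.preconnected hvS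
          fun w hw hvw => huS ((Set.ext_iff.1 hdeg w).1 hvw ▸ hw)
        refine ⟨{u}, ?_, fun h => huv h.symm, IsTree.of_subsingleton⟩
        rintro x (⟨hxK, hxv⟩ | ⟨rfl, -⟩)
        exacts [absurd (hSv ▸ hKS hxK : x ∈ ({v} : Set V)) hxv, rfl]
    · refine ⟨S, ?_, hvS, hS⟩
      rintro x (⟨hxK, -⟩ | ⟨-, hvK⟩)
      exacts [hKS hxK, absurd (hKS hvK) hvS]
  · rintro ⟨S', hKS', hvS', hS'⟩
    by_cases hvK : v ∈ K
    · refine ⟨insert v S', fun x hx => ?_,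
        (isTree_induce_insert_iff hdeg hvS' (hKS' (Or.inr ⟨rfl, hvK⟩))).2 hS'⟩
      exact (eq_or_ne x v).imp id fun hxv => hKS' (Or.inl ⟨hx, hxv⟩)
    · exact ⟨S', fun x hx => hKS' (Or.inl ⟨hx, fun h => hvK (h ▸ hx)⟩), hS'⟩

/-- Safeness of Reduction Rule 1 (removal of a degree-one vertex): if `v` has
`u` as its unique neighbor in `G`, then `(G, K)` has an induced tree containing
all terminals iff `(G - v, K')` has one, where `K' = (K \ {v}) ∪ {u}` if
`v ∈ K` and `K' = K` otherwise.  (A set `S'` with `v ∉ S'` induces the same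
subgraph in `G` and in `G - v`.) -/
theorem stmt2 (V : Type) [Fintype V] (G : SimpleGraph V) (K : Set V)
    (v u : V) (hdeg : G.neighborSet v = {u}) :
    (∃ S : Set V, K ⊆ S ∧ (G.induce S).IsTree) ↔
    (∃ S' : Set V,
        {x | (x ∈ K ∧ x ≠ v) ∨ (x = u ∧ v ∈ K)} ⊆ S' ∧ v ∉ S' ∧
        (G.induce S').IsTree) :=
  stmt2_general V G K v u hdeg
end

section
/- Let G be a connected graph with minimum degree at least 2 and let F be a minimum feedback edge set of G with |F| = q. Then the spanning tree T(F) = G − F has at most 2q leaves, and the number of vertices of degree at least three in T(F) is at most the number of leaves of T(F). -/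
/-!
A minimum feedback edge set leaves a maximal acyclic subgraph, so `T = G - F` is a spanning tree.
A leaf of `T` has lost at least one of its (at least two) edges of `G`, so it is an end of an
edge of `F`, and there are at most `2q` such ends. The degree sum `∑ v, deg v = 2 (n - 1)` of a
tree gives `∑ v, (deg v - 2) = -2`; a vertex of degree at least three contributes at least `1`
and a leaf exactly `-1`, so there are at least two more leaves than vertices of degree `≥ 3`.
-/

open SimpleGraph

/-- `F` is a feedback edge set of `G`: a set of edges of `G` whose removal
makes `G` acyclic. -/
def IsFES {V : Type} (G : SimpleGraph V) (F : Set (Sym2 V)) : Prop :=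
  F ⊆ G.edgeSet ∧ (G.deleteEdges F).IsAcyclic

/-- `F` is a minimum feedback edge set of `G`. -/
def IsMinFES {V : Type} (G : SimpleGraph V) (F : Set (Sym2 V)) : Prop :=
  IsFES G F ∧ ∀ F' : Set (Sym2 V), IsFES G F' → F.ncard ≤ F'.ncard

/-- The set of leaves (degree-one vertices) of a graph. -/
def leavesOf {V : Type} (T : SimpleGraph V) : Set V :=
  {v | (T.neighborSet v).ncard = 1}

open Finset

theorem Set.ncard_le_two_mul_ncard_of_forall_exists_mem {α : Type*} {s : Set α}
    {F : Set (Sym2 α)} (hF : F.Finite) (hs : ∀ v ∈ s, ∃ e ∈ F, v ∈ e) :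
    s.ncard ≤ 2 * F.ncard := by
  classical
  calc s.ncard ≤ ((hF.toFinset.biUnion Sym2.toFinset : Finset α) : Set α).ncard :=
        Set.ncard_le_ncard (fun v hv => by simpa using hs v hv) (Finset.finite_toSet _)
    _ ≤ ∑ e ∈ hF.toFinset, #e.toFinset := by rw [Set.ncard_coe_finset]; exact card_biUnion_le
    _ ≤ ∑ _e ∈ hF.toFinset, 2 :=
        sum_le_sum fun e _ => by rw [Sym2.card_toFinset]; split_ifs <;> omega
    _ = 2 * F.ncard := by rw [sum_const, smul_eq_mul, mul_comm, Set.ncard_eq_toFinset_card F hF]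

namespace SimpleGraph

variable {V : Type*}

theorem ncard_neighborSet_eq_degree (G : SimpleGraph V) (v : V) [Fintype (G.neighborSet v)] :
    (G.neighborSet v).ncard = G.degree v := by
  rw [Set.ncard_eq_toFinset_card', ← card_neighborFinset_eq_degree, neighborFinset_def]

theorem exists_mem_of_ncard_neighborSet_deleteEdges_lt [Finite V] {G : SimpleGraph V}
    {F : Set (Sym2 V)} {v : V}
    (h : ((G.deleteEdges F).neighborSet v).ncard < (G.neighborSet v).ncard) :
    ∃ e ∈ F, v ∈ e := by
  obtain ⟨w, hwG, hwF⟩ := Set.sdiff_nonempty_of_ncard_lt_ncard h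
  refine ⟨s(v, w), ?_, Sym2.mem_mk_left v w⟩
  by_contra he
  exact hwF (deleteEdges_adj.mpr ⟨hwG, he⟩)

theorem IsTree.card_filter_three_le_degree_add_two_le [Fintype V] [Nontrivial V]
    {T : SimpleGraph V} [DecidableRel T.Adj] (hT : T.IsTree) :
    #{v | 3 ≤ T.degree v} + 2 ≤ #{v | T.degree v = 1} := by
  have hpoint (v : V) : 2 + (if 3 ≤ T.degree v then 1 else 0) ≤
      T.degree v + (if T.degree v = 1 then 1 else 0) := by
    have := hT.connected.preconnected.degree_pos_of_nontrivial v
    split_ifs <;> omega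
  have hsum := sum_le_sum fun v (_ : v ∈ univ) => hpoint v
  rw [sum_add_distrib, sum_add_distrib, sum_degrees_eq_twice_card_edges, sum_boole,
    sum_boole, sum_const, card_univ, smul_eq_mul] at hsum
  have hedges := hT.card_edgeFinset
  simp only [Nat.cast_id] at hsum
  omega

end SimpleGraph

namespace IsMinFES

variable {V : Type} [Finite V] {G : SimpleGraph V} {F : Set (Sym2 V)}

/-- A larger acyclic `H ≤ G` is `G` minus the edges of `F` that are missing from `H`, a feedback
edge set inside `F`; minimality of `|F|` forces it to be all of `F`. -/
theorem maximal_isAcyclic_deleteEdges (hF : IsMinFES G F) :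
    Maximal (fun H => H ≤ G ∧ H.IsAcyclic) (G.deleteEdges F) := by
  refine ⟨⟨deleteEdges_le F, hF.1.2⟩, fun H ⟨hHG, hH⟩ hle => ?_⟩
  have hsub : G.edgeSet \ H.edgeSet ⊆ F := by
    rintro e ⟨heG, heH⟩
    by_contra heF
    exact heH (edgeSet_mono hle (by rw [edgeSet_deleteEdges]; exact ⟨heG, heF⟩))
  have hfes : IsFES G (G.edgeSet \ H.edgeSet) := by
    rw [IsFES, deleteEdges_sdiff_eq_of_le hHG]
    exact ⟨Set.sdiff_subset, hH⟩
  have hdiff_eq : G.edgeSet \ H.edgeSet = F := Set.eq_of_subset_of_ncard_le hsub (hF.2 _ hfes)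
  rw [← hdiff_eq, deleteEdges_sdiff_eq_of_le hHG]

theorem connected_deleteEdges (hF : IsMinFES G F) (hG : G.Connected) :
    (G.deleteEdges F).Connected := by
  have hreach := reachable_eq_of_maximal_isAcyclic _ hF.maximal_isAcyclic_deleteEdges
  rw [connected_iff]
  exact ⟨fun u v => hreach ▸ hG.preconnected u v, hG.nonempty⟩

end IsMinFES

/-- If `G` is connected with minimum degree at least 2 and `F` is a minimum
feedback edge set of `G` with `|F| = q`, then the spanning tree `T(F) = G - F`
has at most `2q` leaves, and at most as many vertices of degree at least three
as leaves. -/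
theorem stmt3 (V : Type) [Fintype V] (G : SimpleGraph V)
    (hconn : G.Connected) (hdeg : ∀ v : V, 2 ≤ (G.neighborSet v).ncard)
    (F : Set (Sym2 V)) (hF : IsMinFES G F) (q : ℕ) (hq : F.ncard = q) :
    (leavesOf (G.deleteEdges F)).ncard ≤ 2 * q ∧
    {v : V | 3 ≤ ((G.deleteEdges F).neighborSet v).ncard}.ncard ≤
      (leavesOf (G.deleteEdges F)).ncard := by
  classical
  set T := G.deleteEdges F
  have hT : T.IsTree := ⟨hF.connected_deleteEdges hconn, hF.1.2⟩
  have : Nontrivial V := by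
    obtain ⟨v⟩ := hconn.nonempty
    obtain ⟨w, hw⟩ := Set.nonempty_of_ncard_ne_zero (by have := hdeg v; omega :
      (G.neighborSet v).ncard ≠ 0)
    exact ⟨v, w, G.ne_of_adj hw⟩
  constructor
  · refine hq ▸ Set.ncard_le_two_mul_ncard_of_forall_exists_mem (Set.toFinite F) fun v hv => ?_
    exact exists_mem_of_ncard_neighborSet_deleteEdges_lt (by rw [hv]; have := hdeg v; omega)
  · have := hT.card_filter_three_le_degree_add_two_le
    simp only [leavesOf, ncard_neighborSet_eq_degree]
    simp only [Set.ncard_eq_toFinset_card', Set.toFinset_ofPred]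
    omega
end

section
/- Let G be a connected graph, F a minimum feedback edge set of G, and let u, f, w_1, w_2 be vertices of G with w_1 ≠ w_2, w_2 ≠ u, and u ≠ w_1, such that u and f form an F-pair, w_2 is the unique neighbor of f in T(F) that F-links f to u, w_1 F-links w_2 to u, and the edge fw_1 belongs to F. Then F'' = (F ∖ {fw_1}) ∪ {fw_2} is a minimum feedback edge set of G, and the set of leaves of T(F) is a proper subset of the set of leaves of T(F''). -/
open SimpleGraph

/-- The set `D_2` of (non-leaf) vertices of degree exactly two. -/
def D2 {V : Type} (T : SimpleGraph V) : Set V :=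
  {v | (T.neighborSet v).ncard = 2}

/-- The set `D_*` of vertices of degree at least three. -/
def Dstar {V : Type} (T : SimpleGraph V) : Set V :=
  {v | 3 ≤ (T.neighborSet v).ncard}

/-- `u` `F`-links `v` to `f` (in the tree `T = T(F)`): either `v = u` or the
deletion of `u` from `T` leaves no `v–f` path; equivalently, every `v–f` walk
of `T` passes through `u`. -/
def FLinks {V : Type} (T : SimpleGraph V) (u v f : V) : Prop :=
  ∀ p : T.Walk v f, u ∈ p.support

/-- `w` lies on the unique `u–f` path of the tree `T`; equivalently, every
`u–f` walk of `T` passes through `w`. -/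
def OnPath {V : Type} (T : SimpleGraph V) (u f w : V) : Prop :=
  ∀ p : T.Walk u f, w ∈ p.support

/-- `w` is an internal vertex of the unique `u–f` path of the tree `T`,
i.e. `w ∈ P*_F(u,f)`. -/
def OnPathInt {V : Type} (T : SimpleGraph V) (u f w : V) : Prop :=
  OnPath T u f w ∧ w ≠ u ∧ w ≠ f

/-- `u, f` form an `F`-pair (for the tree `T = T(F)`): they are distinct,
joined by a path, and every internal vertex of the unique `u–f` path of `T`
belongs to `D_2`. -/
def IsFPair {V : Type} (T : SimpleGraph V) (u f : V) : Prop :=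
  u ≠ f ∧ T.Reachable u f ∧ ∀ w, OnPathInt T u f w → w ∈ D2 T

/-!
Inside the tree `T = G - F`, the vertices `w₂` and `w₁` lie in this order on the `f–u` path, so
the `w₂–u` path avoids `f` and passes through `w₁`. Hence deleting the tree edge `f w₂` leaves
`w₁` on `w₂`'s side and `f` on the other, and adding `f w₁` back gives an acyclic graph again,
with the same number of deleted edges. Only the degrees of `f`, `w₁` and `w₂` change: `f` keeps
its degree, `w₁` is no leaf either before or after, and `w₂`, an inner vertex of the `F`-pair
path and thus of degree two, becomes a new leaf.
-/

section

variable {V : Type} {T : SimpleGraph V}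

lemma FLinks.trans {a b v f : V} (hab : FLinks T a v f) (hba : FLinks T b a f) :
    FLinks T b v f := by
  classical
  exact fun p => p.support_dropUntil_subset_support (hab p) (hba (p.dropUntil a (hab p)))

lemma FLinks.onPath {w v f : V} (h : FLinks T w v f) : OnPath T f v w := fun p => by
  simpa using h p.reverse

lemma IsFPair.ncard_neighborSet_eq_two {u f w : V} (hpair : IsFPair T u f)
    (h : FLinks T w f u) (hwu : w ≠ u) (hwf : w ≠ f) : (T.neighborSet w).ncard = 2 :=
  hpair.2.2 w ⟨h.onPath, hwu, hwf⟩

lemma notMem_leavesOf_of_ncard_neighborSet_eq_two {v : V}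
    (h : (T.neighborSet v).ncard = 2) : v ∉ leavesOf T := fun hv =>
  absurd (h.symm.trans hv) (by decide)

lemma IsMinFES.exchange {G : SimpleGraph V} {F : Set (Sym2 V)} {e e' : Sym2 V}
    (hF : IsMinFES G F) (he : e ∈ F) (he' : e' ∈ G.edgeSet) (he'F : e' ∉ F)
    (hacyc : (G.deleteEdges (insert e' (F \ {e}))).IsAcyclic) :
    IsMinFES G (insert e' (F \ {e})) :=
  ⟨⟨Set.insert_subset he' (Set.sdiff_subset.trans hF.1.1), hacyc⟩,
    fun F' hF' => (Set.ncard_exchange he'F he).trans_le (hF.2 F' hF')⟩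

end

namespace SimpleGraph

variable {V : Type}

section Walk

variable {T : SimpleGraph V}

lemma Walk.IsPath.notMem_support_of_fLinks {a b c : V} {p : T.Walk a b} (hp : p.IsPath)
    (hca : c ≠ a) (h : FLinks T a c b) : c ∉ p.support := by
  classical
  intro hc
  -- the tail of `p` from `c` must return to its start `a`
  have ha : a ∈ (p.dropUntil c hc).support.tail :=
    ((Walk.mem_support_iff _).mp (h _)).resolve_left hca.symm
  have hnd : ((p.takeUntil c hc).support ++ (p.dropUntil c hc).support.tail).Nodup := by
    rw [← Walk.support_append, Walk.take_spec]
    exact hp.support_nodup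
  exact List.disjoint_of_nodup_append hnd (Walk.start_mem_support _) ha

lemma reachable_deleteEdges_of_fLinks {u f w₁ w₂ : V} (hreach : T.Reachable w₂ u)
    (hf : f ≠ w₂) (hw₂ : FLinks T w₂ f u) (hw₁ : FLinks T w₁ w₂ u) :
    (T.deleteEdges {s(f, w₂)}).Reachable w₂ w₁ := by
  classical
  obtain ⟨p, hp⟩ := hreach.exists_isPath
  have hfp : f ∉ p.support := hp.notMem_support_of_fLinks hf hw₂
  refine reachable_deleteEdges_iff_exists_walk.mpr
    ⟨p.takeUntil w₁ (hw₁ p), fun he => hfp ?_⟩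
  exact p.support_takeUntil_subset_support _ (Walk.fst_mem_support_of_mem_edges _ he)

lemma IsAcyclic.not_reachable_deleteEdges_of_fLinks {u f w₁ w₂ : V} (hT : T.IsAcyclic)
    (hadj : T.Adj f w₂) (hreach : T.Reachable w₂ u) (hw₂ : FLinks T w₂ f u)
    (hw₁ : FLinks T w₁ w₂ u) : ¬ (T.deleteEdges {s(f, w₂)}).Reachable f w₁ := fun h =>
  isAcyclic_iff_forall_adj_isBridge.mp hT hadj
    (h.trans (reachable_deleteEdges_of_fLinks hreach hadj.ne hw₂ hw₁).symm)

end Walk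

section Exchange

variable {H : SimpleGraph V} {a b c : V}

lemma deleteEdges_insert_sdiff_singleton {F : Set (Sym2 V)} (hac : s(a, c) ∈ F)
    (hHac : H.Adj a c) (hbc : b ≠ c) :
    H.deleteEdges (insert s(a, b) (F \ {s(a, c)})) =
      (H.deleteEdges F).deleteEdges {s(a, b)} ⊔ edge a c := by
  ext x y
  have hloop : H.Adj x y → x ≠ y := Adj.ne
  have hHca := hHac.symm
  simp only [deleteEdges_adj, sup_adj, edge_adj, Set.mem_insert_iff, Set.mem_sdiff,
    Set.mem_singleton_iff]
  grind

lemma neighborSet_exchange_left (hac : a ≠ c) :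
    (H.deleteEdges {s(a, b)} ⊔ edge a c).neighborSet a = insert c (H.neighborSet a \ {b}) := by
  ext x
  simp only [mem_neighborSet, sup_adj, deleteEdges_adj, edge_adj, Set.mem_insert_iff,
    Set.mem_sdiff, Set.mem_singleton_iff]
  grind

lemma neighborSet_exchange_right (hab : a ≠ b) (hbc : b ≠ c) :
    (H.deleteEdges {s(a, b)} ⊔ edge a c).neighborSet b = H.neighborSet b \ {a} := by
  ext x
  simp only [mem_neighborSet, sup_adj, deleteEdges_adj, edge_adj, Set.mem_sdiff,
    Set.mem_singleton_iff]
  grind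

lemma neighborSet_exchange_of_ne {v : V} (hva : v ≠ a) (hvb : v ≠ b) (hvc : v ≠ c) :
    (H.deleteEdges {s(a, b)} ⊔ edge a c).neighborSet v = H.neighborSet v := by
  ext x
  simp only [mem_neighborSet, sup_adj, deleteEdges_adj, edge_adj, Set.mem_singleton_iff]
  grind

lemma ncard_neighborSet_exchange_of_ne (hab : H.Adj a b) (hac : ¬ H.Adj a c) (hne : a ≠ c)
    {v : V} (hvb : v ≠ b) (hvc : v ≠ c) :
    ((H.deleteEdges {s(a, b)} ⊔ edge a c).neighborSet v).ncard = (H.neighborSet v).ncard := by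
  by_cases hva : v = a
  · subst hva
    rw [neighborSet_exchange_left hne]
    exact Set.ncard_exchange hac hab
  · rw [neighborSet_exchange_of_ne hva hvb hvc]

lemma leavesOf_ssubset_exchange (hab : H.Adj a b) (hac : ¬ H.Adj a c) (hne : a ≠ c)
    (hbc : b ≠ c) (hb : (H.neighborSet b).ncard = 2) (hc : c ∉ leavesOf H) :
    leavesOf H ⊂ leavesOf (H.deleteEdges {s(a, b)} ⊔ edge a c) := by
  have hb_leaf : b ∈ leavesOf (H.deleteEdges {s(a, b)} ⊔ edge a c) := by
    change Set.ncard _ = 1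
    rw [neighborSet_exchange_right hab.ne hbc,
      Set.ncard_sdiff_singleton_of_mem ((H.mem_neighborSet b a).mpr hab.symm), hb]
  have hb_old : b ∉ leavesOf H := notMem_leavesOf_of_ncard_neighborSet_eq_two hb
  refine (Set.ssubset_iff_of_subset fun v hv => ?_).mpr ⟨b, hb_leaf, hb_old⟩
  have hvb : v ≠ b := by rintro rfl; exact hb_old hv
  have hvc : v ≠ c := by rintro rfl; exact hc hv
  exact (ncard_neighborSet_exchange_of_ne hab hac hne hvb hvc).trans hv

end Exchange

end SimpleGraph

theorem stmt4_general (V : Type) (G : SimpleGraph V)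
    (F : Set (Sym2 V)) (hF : IsMinFES G F)
    (u f w₁ w₂ : V)
    (h12 : w₁ ≠ w₂) (h2u : w₂ ≠ u) (hu1 : u ≠ w₁)
    (hpair : IsFPair (G.deleteEdges F) u f)
    (hw2adj : (G.deleteEdges F).Adj f w₂)
    (hw2link : FLinks (G.deleteEdges F) w₂ f u)
    (hw1link : FLinks (G.deleteEdges F) w₁ w₂ u)
    (hfw1 : s(f, w₁) ∈ F) :
    IsMinFES G (insert s(f, w₂) (F \ {s(f, w₁)})) ∧
    leavesOf (G.deleteEdges F) ⊂
      leavesOf (G.deleteEdges (insert s(f, w₂) (F \ {s(f, w₁)}))) := by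
  set T := G.deleteEdges F
  obtain ⟨hGfw2, hfw2F⟩ := deleteEdges_adj.mp hw2adj
  have hGfw1 : G.Adj f w₁ := hF.1.1 hfw1
  have hTfw1 : ¬ T.Adj f w₁ := fun h => (deleteEdges_adj.mp h).2 hfw1
  have hT' : G.deleteEdges (insert s(f, w₂) (F \ {s(f, w₁)})) =
      T.deleteEdges {s(f, w₂)} ⊔ edge f w₁ :=
    deleteEdges_insert_sdiff_singleton hfw1 hGfw1 h12.symm
  have hsep : ¬ (T.deleteEdges {s(f, w₂)}).Reachable f w₁ :=
    hF.1.2.not_reachable_deleteEdges_of_fLinks hw2adj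
      (hw2adj.symm.reachable.trans hpair.2.1.symm) hw2link hw1link
  have hacyc : (T.deleteEdges {s(f, w₂)} ⊔ edge f w₁).IsAcyclic :=
    (hF.1.2.anti (deleteEdges_le _)).sup_edge_of_not_reachable hsep
  have hdeg₂ := hpair.ncard_neighborSet_eq_two hw2link h2u hw2adj.ne'
  have hdeg₁ := hpair.ncard_neighborSet_eq_two (hw2link.trans hw1link) hu1.symm hGfw1.ne'
  refine ⟨hF.exchange hfw1 hGfw2 hfw2F (hT' ▸ hacyc), ?_⟩
  rw [hT']
  exact leavesOf_ssubset_exchange hw2adj hTfw1 hGfw1.ne h12.symm hdeg₂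
    (notMem_leavesOf_of_ncard_neighborSet_eq_two hdeg₁)

/-- Safeness of Reduction Rule 2: swapping the feedback edge `f w₁` for the
tree edge `f w₂` yields another minimum feedback edge set whose tree has
strictly more leaves (the old leaves are kept). -/
theorem stmt4 (V : Type) [Fintype V] (G : SimpleGraph V) (hconn : G.Connected)
    (F : Set (Sym2 V)) (hF : IsMinFES G F)
    (u f w₁ w₂ : V)
    (h12 : w₁ ≠ w₂) (h2u : w₂ ≠ u) (hu1 : u ≠ w₁)
    (hpair : IsFPair (G.deleteEdges F) u f)
    (hw2adj : (G.deleteEdges F).Adj f w₂)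
    (hw2link : FLinks (G.deleteEdges F) w₂ f u)
    (hw2uniq : ∀ w, (G.deleteEdges F).Adj f w → FLinks (G.deleteEdges F) w f u → w = w₂)
    (hw1link : FLinks (G.deleteEdges F) w₁ w₂ u)
    (hfw1 : s(f, w₁) ∈ F) :
    IsMinFES G (insert s(f, w₂) (F \ {s(f, w₁)})) ∧
    leavesOf (G.deleteEdges F) ⊂
      leavesOf (G.deleteEdges (insert s(f, w₂) (F \ {s(f, w₁)}))) :=
  stmt4_general V G F hF u f w₁ w₂ h12 h2u hu1 hpair hw2adj hw2link hw1link hfw1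
end

section
/- Let G be a connected graph, F a minimum feedback edge set of G, and let f, u, v, w_1, w_2 be vertices of G such that u and f form an F-pair with |P_F(u,f)| ≥ 4, v ∉ leaves(T(F)) ∪ P_F(u,f), w_1 and w_2 are adjacent vertices of P*_F(u,f), the edge vw_1 belongs to F, and w_2 F-links v and w_1. Then F'' = (F ∖ {vw_1}) ∪ {w_1w_2} is a minimum feedback edge set of G, and T(F'') has strictly more leaves than T(F). -/
/-!
Since `w₂` `F`-links `v` to `w₁` and every edge of the forest `T(F)` is a bridge, every
`v`–`w₁` walk in `T(F)` crosses the edge `w₁w₂`. So every cycle that the re-inserted edge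
`vw₁` could close is broken by deleting `w₁w₂`, and the exchange keeps `|F|`. Degrees change
only at `v`, `w₁`, `w₂`; neither `v` nor `w₁` is a leaf of `T(F)`, while `w₂` drops from
degree two to one, so the old leaves survive and `w₂` is a new one.
-/

open SimpleGraph

namespace SimpleGraph

variable {V : Type} {T : SimpleGraph V}

theorem IsAcyclic.mem_edges_of_forall_mem_support (hT : T.IsAcyclic) {v w₁ w₂ : V}
    (hadj : T.Adj w₁ w₂) (hlink : ∀ p : T.Walk v w₁, w₂ ∈ p.support) (q : T.Walk v w₁) :
    s(w₁, w₂) ∈ q.edges := by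
  classical
  rw [Sym2.eq_swap]
  exact q.edges_dropUntil_subset_edges (hlink q) <|
    isBridge_iff_forall_walk_mem_edges.mp (isAcyclic_iff_forall_adj_isBridge.mp hT hadj.symm) _

variable {G : SimpleGraph V} {F : Set (Sym2 V)} {a b : V} {d : Sym2 V}

theorem mem_edgeSet_deleteEdges_of_mem_edgeSet_deleteEdges_insert_diff {e : Sym2 V}
    (he : e ∈ (G.deleteEdges (insert d (F \ {s(a, b)}))).edgeSet) (hne : e ≠ s(a, b)) :
    e ∈ (G.deleteEdges F).edgeSet := by
  simp only [edgeSet_deleteEdges, Set.mem_sdiff, Set.mem_insert_iff, Set.mem_singleton_iff] at he ⊢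
  tauto

theorem isAcyclic_deleteEdges_insert_diff (hT : (G.deleteEdges F).IsAcyclic)
    (hcut : ∀ q : (G.deleteEdges F).Walk a b, d ∈ q.edges) :
    (G.deleteEdges (insert d (F \ {s(a, b)}))).IsAcyclic := by
  have hsub {x y : V} (p : (G.deleteEdges (insert d (F \ {s(a, b)}))).Walk x y)
      (hp : s(a, b) ∉ p.edges) : ∀ e ∈ p.edges, e ∈ (G.deleteEdges F).edgeSet := fun e he ↦
    mem_edgeSet_deleteEdges_of_mem_edgeSet_deleteEdges_insert_diff (p.edges_subset_edgeSet he)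
      (by rintro rfl; exact hp he)
  intro x c hc
  by_cases he : s(a, b) ∈ c.edges
  · obtain ⟨q, hq⟩ := reachable_deleteEdges_iff_exists_walk.mp
      (adj_and_reachable_delete_edges_iff_exists_cycle.mpr ⟨x, c, hc, he⟩).2
    have hdq : d ∈ q.edges := by simpa using hcut (q.transfer _ (hsub q hq))
    have hd := q.edges_subset_edgeSet hdq
    simp [edgeSet_deleteEdges] at hd
  · exact hT (c.transfer _ (hsub c he)) (hc.transfer _)

end SimpleGraph

section Swap

variable {V : Type} {G : SimpleGraph V} {F : Set (Sym2 V)} {a b : V}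

theorem IsMinFES.insert_diff {d : Sym2 V} (hF : IsMinFES G F) (hab : s(a, b) ∈ F)
    (hd : d ∈ (G.deleteEdges F).edgeSet)
    (hcut : ∀ q : (G.deleteEdges F).Walk a b, d ∈ q.edges) :
    IsMinFES G (insert d (F \ {s(a, b)})) := by
  obtain ⟨⟨hFG, hT⟩, hmin⟩ := hF
  rw [edgeSet_deleteEdges] at hd
  refine ⟨⟨Set.insert_subset hd.1 (Set.sdiff_subset.trans hFG),
    isAcyclic_deleteEdges_insert_diff hT hcut⟩, fun F' hF' ↦ ?_⟩
  rw [Set.ncard_exchange hd.2 hab]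
  exact hmin F' hF'

theorem neighborSet_deleteEdges_insert_diff_of_notMem {d : Sym2 V} {x : V}
    (hxab : x ∉ s(a, b)) (hxd : x ∉ d) :
    (G.deleteEdges (insert d (F \ {s(a, b)}))).neighborSet x =
      (G.deleteEdges F).neighborSet x := by
  ext y
  have hd : s(x, y) ≠ d := fun h ↦ hxd (h ▸ Sym2.mem_mk_left x y)
  have hab : s(x, y) ≠ s(a, b) := fun h ↦ hxab (h ▸ Sym2.mem_mk_left x y)
  simp [hd, hab]

theorem neighborSet_deleteEdges_insert_diff_right {x y : V} (hyab : y ∉ s(a, b)) :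
    (G.deleteEdges (insert s(x, y) (F \ {s(a, b)}))).neighborSet y =
      (G.deleteEdges F).neighborSet y \ {x} := by
  ext z
  have hab : s(y, z) ≠ s(a, b) := fun h ↦ hyab (h ▸ Sym2.mem_mk_left y z)
  simp only [mem_neighborSet, deleteEdges_adj, Set.mem_insert_iff, Set.mem_sdiff,
    Set.mem_singleton_iff, hab, Sym2.eq_swap (a := x), Sym2.congr_right]
  tauto

theorem notMem_leavesOf_of_mem_D2 {T : SimpleGraph V} {x : V} (hx : x ∈ D2 T) :
    x ∉ leavesOf T := by
  simp only [leavesOf, D2, Set.mem_ofPred_eq] at hx ⊢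
  omega

theorem leavesOf_ssubset_leavesOf_deleteEdges_insert_diff {y : V}
    (ha : a ∉ leavesOf (G.deleteEdges F)) (hb : b ∉ leavesOf (G.deleteEdges F))
    (hy : y ∈ D2 (G.deleteEdges F)) (hby : (G.deleteEdges F).Adj b y) (hay : a ≠ y) :
    leavesOf (G.deleteEdges F) ⊂ leavesOf (G.deleteEdges (insert s(b, y) (F \ {s(a, b)}))) := by
  refine (Set.ssubset_iff_of_subset fun x hx ↦ ?_).mpr ⟨y, ?_, notMem_leavesOf_of_mem_D2 hy⟩
  · have hxy : x ≠ y := by rintro rfl; exact notMem_leavesOf_of_mem_D2 hy hx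
    have hxa : x ≠ a := by rintro rfl; exact ha hx
    have hxb : x ≠ b := by rintro rfl; exact hb hx
    simp only [leavesOf, Set.mem_ofPred_eq] at hx ⊢
    rwa [neighborSet_deleteEdges_insert_diff_of_notMem (by simp [hxa, hxb]) (by simp [hxb, hxy])]
  · simp only [leavesOf, D2, Set.mem_ofPred_eq] at hy ⊢
    rw [neighborSet_deleteEdges_insert_diff_right (by simp [hay.symm, hby.ne.symm]),
      Set.ncard_sdiff_singleton_of_mem (show b ∈ (G.deleteEdges F).neighborSet y from hby.symm), hy]

end Swap

theorem stmt5_general (V : Type) [Fintype V] (G : SimpleGraph V)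
    (F : Set (Sym2 V)) (hF : IsMinFES G F)
    (f u v w₁ w₂ : V)
    (hpair : IsFPair (G.deleteEdges F) u f)
    (hv : v ∉ leavesOf (G.deleteEdges F) ∪ {w : V | OnPath (G.deleteEdges F) u f w})
    (hw₁ : OnPathInt (G.deleteEdges F) u f w₁)
    (hw₂ : OnPathInt (G.deleteEdges F) u f w₂)
    (hadj : (G.deleteEdges F).Adj w₁ w₂)
    (hvw1 : s(v, w₁) ∈ F)
    (hlink : FLinks (G.deleteEdges F) w₂ v w₁) :
    IsMinFES G (insert s(w₁, w₂) (F \ {s(v, w₁)})) ∧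
    (leavesOf (G.deleteEdges F)).ncard <
      (leavesOf (G.deleteEdges (insert s(w₁, w₂) (F \ {s(v, w₁)})))).ncard := by
  have hvw₂ : v ≠ w₂ := by rintro rfl; exact hv (Or.inr hw₂.1)
  refine ⟨hF.insert_diff hvw1 hadj (hF.1.2.mem_edges_of_forall_mem_support hadj hlink), ?_⟩
  refine Set.ncard_lt_ncard ?_ (Set.toFinite _)
  exact leavesOf_ssubset_leavesOf_deleteEdges_insert_diff (fun h ↦ hv (Or.inl h))
    (notMem_leavesOf_of_mem_D2 (hpair.2.2 w₁ hw₁)) (hpair.2.2 w₂ hw₂) hadj hvw₂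

/-- Safeness of Reduction Rule 3: swapping the feedback edge `v w₁` for the
tree edge `w₁ w₂` yields another minimum feedback edge set whose tree has
strictly more leaves. -/
theorem stmt5 (V : Type) [Fintype V] (G : SimpleGraph V) (hconn : G.Connected)
    (F : Set (Sym2 V)) (hF : IsMinFES G F)
    (f u v w₁ w₂ : V)
    (hpair : IsFPair (G.deleteEdges F) u f)
    (hlen : 4 ≤ {w : V | OnPath (G.deleteEdges F) u f w}.ncard)
    (hv : v ∉ leavesOf (G.deleteEdges F) ∪ {w : V | OnPath (G.deleteEdges F) u f w})
    (hw₁ : OnPathInt (G.deleteEdges F) u f w₁)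
    (hw₂ : OnPathInt (G.deleteEdges F) u f w₂)
    (hadj : (G.deleteEdges F).Adj w₁ w₂)
    (hvw1 : s(v, w₁) ∈ F)
    (hlink : FLinks (G.deleteEdges F) w₂ v w₁) :
    IsMinFES G (insert s(w₁, w₂) (F \ {s(v, w₁)})) ∧
    (leavesOf (G.deleteEdges F)).ncard <
      (leavesOf (G.deleteEdges (insert s(w₁, w₂) (F \ {s(v, w₁)})))).ncard :=
  stmt5_general V G F hF f u v w₁ w₂ hpair hv hw₁ hw₂ hadj hvw1 hlink
end

section
/- Let G be a connected graph and F a minimum feedback edge set of G such that no single-edge swap of the following four kinds is possible: (i) there are no vertices u, f, w_1, w_2 with w_1 ≠ w_2, w_2 ≠ u, u ≠ w_1, where u, f form an F-pair, w_2 is the unique neighbor of f in T(F) that F-links f to u, w_1 F-links w_2 to u, and fw_1 ∈ F; (ii) there are no vertices u, f, v, w_1, w_2 where u, f form an F-pair with |P_F(u,f)| ≥ 4, v ∉ leaves(T(F)) ∪ P_F(u,f), w_1 and w_2 are adjacent vertices of P*_F(u,f), vw_1 ∈ F, and w_2 F-links v and w_1; (iii) there are no vertices f, u, v, z, w_1,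 w_2 where v ∈ leaves(T(F)) ∖ {f}, w_2 ∈ D_2 is the unique neighbor of v in T(F), u, f form an F-pair, z, v form an F-pair, u F-links f to z, w_1 ∈ P*_F(u,f), and vw_1 ∈ F; and (iv) there are no vertices f, u, v, z, w_1, w_2, w_3 where v ∈ leaves(T(F)), w_3 ∈ N_{T(F)}(u) ∩ P_F(u,f), w_2w_3 and vz are edges of T(F), u, f form an F-pair, z ∈ D_*, u F-links f to v, w_1 ∈ P_F(u,f) ∖ {w_2}, vw_1 ∈ F, and w_1 F-links w_2 to f. Then for every F-pair a, b with a, b ∉ D_2 and |P*_F(a,b)| ≥ 5, and every internal vertex w of P_F(a,b) at distance at least three in T(F) from both a and b, the degree of w in G equals the degree of w in T(F). -/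
open SimpleGraph

/-!
Suppose `w` had an incident edge `wx ∈ F`. As `F` is minimum, `x` and `w` are joined in the forest
`T = T(F)`. If `x` lies on the `a`–`b` path, the part of it from `x` through `w` to one of its ends
is again an `F`-pair, and Rule 2 applies. Otherwise the tree path from `x` to `w` enters the
`a`–`b` path at an end, say `a`, because the inner vertices have degree two. Then Rule 3 applies if
`x` is not a leaf, and Rule 4 or Rule 5 if it is, according as the neighbour of `x` has degree two
or more. Betweenness in `T` is handled through its separation properties and the identity
`d(u, w) + d(w, v) = d(u, v)` for `w` between `u` and `v`.
-/

section

variable {V : Type} {T : SimpleGraph V} {a b u v w x y z : V}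

namespace OnPath

lemma left (u v : V) : OnPath T u v u := fun p => p.start_mem_support

lemma right (u v : V) : OnPath T u v v := fun p => p.end_mem_support

lemma symm (h : OnPath T u v w) : OnPath T v u w := fun p => by
  simpa using h p.reverse

lemma eq_of_self (h : OnPath T u u w) : w = u := by
  simpa using h .nil

lemma eq_or_eq_of_adj (h : OnPath T u v w) (huv : T.Adj u v) : w = u ∨ w = v := by
  simpa using h (.cons huv .nil)

lemma left_or_right (h : OnPath T u v w) (z : V) : OnPath T u z w ∨ OnPath T z v w := by
  by_contra! hz
  simp only [OnPath, not_forall] at hz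
  obtain ⟨⟨p, hp⟩, ⟨q, hq⟩⟩ := hz
  rcases (p.mem_support_append_iff q).1 (h (p.append q)) with h' | h'
  exacts [hp h', hq h']

lemma trans_left (h : OnPath T u v w) (h' : OnPath T u w y) : OnPath T u v y := fun p => by
  classical
  exact p.support_takeUntil_subset_support (h p) (h' _)

lemma trans_right (h : OnPath T u v w) (h' : OnPath T w v y) : OnPath T u v y :=
  (h.symm.trans_left h'.symm).symm

lemma reachable_left (h : OnPath T u v w) (hr : T.Reachable u v) : T.Reachable u w := by
  classical
  obtain ⟨p⟩ := hr
  exact ⟨p.takeUntil w (h p)⟩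

lemma reachable_right (h : OnPath T u v w) (hr : T.Reachable u v) : T.Reachable w v :=
  (h.symm.reachable_left hr.symm).symm

lemma dist_add (h : OnPath T u v w) (hr : T.Reachable u v) :
    T.dist u w + T.dist w v = T.dist u v := by
  classical
  refine le_antisymm ?_ ((h.reachable_left hr).dist_triangle_left v)
  obtain ⟨p, hp⟩ := hr.exists_walk_length_eq_dist
  have hlen := congrArg Walk.length (p.take_spec (h p))
  rw [Walk.length_append] at hlen
  have := dist_le (p.takeUntil w (h p))
  have := dist_le (p.dropUntil w (h p))
  omega

lemma eq_of_onPath (h : OnPath T u v w) (h' : OnPath T u w v) (hr : T.Reachable u v) :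
    v = w := by
  have hrw := h.reachable_left hr
  have h₁ := h.dist_add hr
  have h₂ := h'.dist_add hrw
  have hvw : T.dist v w = 0 := by rw [dist_comm (u := w)] at h₁; omega
  exact ((hr.symm.trans hrw).dist_eq_zero_iff).1 hvw

end OnPath

lemma onPath_of_neighborSet_eq_singleton (hx : T.neighborSet x = {z}) (hxw : x ≠ w) :
    OnPath T x w z := by
  rintro (_ | ⟨hadj, q⟩)
  · exact absurd rfl hxw
  · have : _ ∈ T.neighborSet x := hadj
    rw [hx, Set.mem_singleton_iff] at this
    simp [← this]

lemma OnPathInt.symm (h : OnPathInt T u v w) : OnPathInt T v u w :=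
  ⟨h.1.symm, h.2.2, h.2.1⟩

namespace SimpleGraph.IsAcyclic

lemma onPath_iff_mem_support (hT : T.IsAcyclic) {p : T.Walk u v} (hp : p.IsPath) :
    OnPath T u v w ↔ w ∈ p.support := by
  classical
  refine ⟨fun h => h p, fun hw q => q.support_bypass_subset_support ?_⟩
  have : q.bypass = p :=
    congrArg Subtype.val ((hT.subsingleton_path u v).elim ⟨q.bypass, q.bypass_isPath⟩ ⟨p, hp⟩)
  rwa [this]

lemma exists_adj_onPath (hT : T.IsAcyclic) (hr : T.Reachable u v) (huv : u ≠ v) :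
    ∃ c, T.Adj u c ∧ OnPath T u v c ∧ ∀ n, T.Adj u n → OnPath T u v n → n = c := by
  obtain ⟨p, hp⟩ := hr.exists_isPath
  have hnil := Walk.not_nil_of_ne (p := p) huv
  exact ⟨p.snd, p.adj_snd hnil, (hT.onPath_iff_mem_support hp).2 (p.getVert_mem_support 1),
    fun n hn hpn => hT.eq_snd_of_adj_start hp hn (hpn p)⟩

lemma exists_adj_adj_of_onPathInt (hT : T.IsAcyclic) (hr : T.Reachable u v)
    (hw : OnPathInt T u v w) :
    ∃ c₁ c₂, c₁ ≠ c₂ ∧ T.Adj w c₁ ∧ T.Adj w c₂ ∧ OnPath T u v c₁ ∧ OnPath T u v c₂ := by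
  obtain ⟨hw, hwu, hwv⟩ := hw
  obtain ⟨c₁, h₁, hc₁, -⟩ := hT.exists_adj_onPath (hw.reachable_left hr).symm hwu
  obtain ⟨c₂, h₂, hc₂, -⟩ := hT.exists_adj_onPath (hw.reachable_right hr) hwv
  refine ⟨c₁, c₂, ?_, h₁, h₂, hw.trans_left hc₁.symm, hw.trans_right hc₂⟩
  rintro rfl
  rcases hw.left_or_right c₁ with h | h
  · exact h₁.ne (h.eq_of_onPath hc₁.symm (hc₁.symm.reachable_left (hw.reachable_left hr))).symm
  · exact h₁.ne (h.symm.eq_of_onPath hc₂.symm (hc₂.symm.reachable_left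
      (hw.reachable_right hr).symm)).symm

lemma two_le_ncard_neighborSet [Finite V] (hT : T.IsAcyclic) (hr : T.Reachable u v)
    (hw : OnPathInt T u v w) : 2 ≤ (T.neighborSet w).ncard := by
  obtain ⟨c₁, c₂, hne, h₁, h₂, -, -⟩ := hT.exists_adj_adj_of_onPathInt hr hw
  rw [← Set.ncard_pair hne]
  exact Set.ncard_le_ncard (Set.insert_subset h₁ (Set.singleton_subset_iff.2 h₂))

lemma onPath_of_adj_of_mem_D2 {n : V} (hT : T.IsAcyclic) (hr : T.Reachable u v)
    (hw : OnPathInt T u v w) (hw2 : w ∈ D2 T) (hn : T.Adj w n) : OnPath T u v n := by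
  obtain ⟨c₁, c₂, hne, h₁, h₂, hc₁, hc₂⟩ := hT.exists_adj_adj_of_onPathInt hr hw
  have hsub : {c₁, c₂} ⊆ T.neighborSet w := Set.insert_subset h₁ (Set.singleton_subset_iff.2 h₂)
  have heq := Set.eq_of_subset_of_ncard_le hsub (by rw [Set.ncard_pair hne]; exact hw2.le)
    (Set.finite_of_ncard_pos (by rw [show (T.neighborSet w).ncard = 2 from hw2]; omega))
  have : n ∈ ({c₁, c₂} : Set V) := heq ▸ hn
  rcases this with rfl | rfl
  exacts [hc₁, hc₂]

end SimpleGraph.IsAcyclic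

namespace IsFPair

lemma symm (h : IsFPair T u v) : IsFPair T v u :=
  ⟨h.1.symm, h.2.1.symm, fun w hw => h.2.2 w hw.symm⟩

lemma of_onPath (h : IsFPair T a b) (hx : OnPath T a b x) (hxa : x ≠ a) : IsFPair T a x := by
  refine ⟨hxa.symm, hx.reachable_left h.2.1, fun y ⟨hy, hya, hyx⟩ =>
    h.2.2 y ⟨hx.trans_left hy, hya, ?_⟩⟩
  rintro rfl
  exact hyx (hx.eq_of_onPath hy h.2.1)

/-- Inner vertices of the `a`–`b` path have degree two, so a path from outside can only enter it
at `a` or `b`. -/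
lemma onPath_or_onPath_of_not_onPath (hT : T.IsAcyclic) (h : IsFPair T a b)
    (hw : OnPath T a b w) (hx : ¬OnPath T a b x) (hr : T.Reachable w x) :
    OnPath T x w a ∨ OnPath T x w b := by
  obtain ⟨p, hp⟩ := hr.exists_isPath
  obtain ⟨d, hd, hfst, hsnd⟩ := p.exists_boundary_dart {y | OnPath T a b y} hw hx
  have hmem : OnPath T w x d.fst :=
    (hT.onPath_iff_mem_support hp).2 (p.dart_fst_mem_support_of_mem_darts hd)
  by_cases hda : d.fst = a
  · exact .inl (hda ▸ hmem.symm)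
  by_cases hdb : d.fst = b
  · exact .inr (hdb ▸ hmem.symm)
  have hint : OnPathInt T a b d.fst := ⟨hfst, hda, hdb⟩
  exact absurd (hT.onPath_of_adj_of_mem_D2 h.2.1 hint (h.2.2 _ hint) d.adj) hsnd

end IsFPair

/-- The vertex of `D_2ᶜ` closest to `x` on the `x`–`a` path. -/
lemma exists_isFPair_of_notMem_D2 (hr : T.Reachable x a) (hxa : x ≠ a) (ha : a ∉ D2 T) :
    ∃ z, OnPath T x a z ∧ z ∉ D2 T ∧ IsFPair T z x := by
  classical
  have hex : ∃ n, ∃ z, OnPath T x a z ∧ z ≠ x ∧ z ∉ D2 T ∧ T.dist x z = n :=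
    ⟨_, a, .right x a, hxa.symm, ha, rfl⟩
  obtain ⟨z, hz, hzx, hz2, hdist⟩ := Nat.find_spec hex
  have hrz := hz.reachable_left hr
  refine ⟨z, hz, hz2, hzx, hrz.symm, fun y ⟨hy, hyz, hyx⟩ => ?_⟩
  by_contra hy2
  have hadd := hy.symm.dist_add hrz
  have hpos := (hy.symm.reachable_right hrz).pos_dist_of_ne hyz
  exact Nat.find_min hex (m := T.dist x y) (by omega) ⟨y, hz.trans_left hy.symm, hyx, hy2, rfl⟩

lemma IsMinFES.reachable_of_mem {G : SimpleGraph V} {F : Set (Sym2 V)} [Finite V]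
    (hF : IsMinFES G F) (he : s(u, v) ∈ F) : (G.deleteEdges F).Reachable u v := by
  by_contra hr
  have hle : G.deleteEdges (F \ {s(u, v)}) ≤ G.deleteEdges F ⊔ edge u v := by
    intro x y hxy
    rw [deleteEdges_adj] at hxy
    by_cases hxyF : s(x, y) ∈ F
    · have hxy' : s(x, y) = s(u, v) := by
        by_contra hne
        exact hxy.2 ⟨hxyF, hne⟩
      exact .inr ((edge_adj ..).2 ⟨Sym2.eq_iff.1 hxy', hxy.1.ne⟩)
    · exact .inl (deleteEdges_adj.2 ⟨hxy.1, hxyF⟩)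
  have hmin := hF.2 _
    ⟨Set.sdiff_subset.trans hF.1.1, (hF.1.2.sup_edge_of_not_reachable hr).anti hle⟩
  have := Set.ncard_sdiff_singleton_lt_of_mem he (Set.toFinite F)
  omega

/-! Applicability of Reduction Rules 2–5 to `F`, written for the forest `T = T(F)`; the
hypotheses `hrule2`–`hrule5` of `stmt8` are their negations for `T = G.deleteEdges F`. -/

def Rule2Applies (T : SimpleGraph V) (F : Set (Sym2 V)) : Prop :=
  ∃ u f w₁ w₂ : V,
    w₁ ≠ w₂ ∧ w₂ ≠ u ∧ u ≠ w₁ ∧ IsFPair T u f ∧ T.Adj f w₂ ∧ FLinks T w₂ f u ∧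
    (∀ w, T.Adj f w → FLinks T w f u → w = w₂) ∧ FLinks T w₁ w₂ u ∧ s(f, w₁) ∈ F

def Rule3Applies (T : SimpleGraph V) (F : Set (Sym2 V)) : Prop :=
  ∃ u f v w₁ w₂ : V,
    IsFPair T u f ∧ 4 ≤ {w : V | OnPath T u f w}.ncard ∧
    v ∉ leavesOf T ∪ {w : V | OnPath T u f w} ∧ OnPathInt T u f w₁ ∧ OnPathInt T u f w₂ ∧
    T.Adj w₁ w₂ ∧ s(v, w₁) ∈ F ∧ FLinks T w₂ v w₁

def Rule4Applies (T : SimpleGraph V) (F : Set (Sym2 V)) : Prop :=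
  ∃ f u v z w₁ w₂ : V,
    v ∈ leavesOf T ∧ v ≠ f ∧ w₂ ∈ D2 T ∧ T.neighborSet v = {w₂} ∧ IsFPair T u f ∧
    IsFPair T z v ∧ FLinks T u f z ∧ OnPathInt T u f w₁ ∧ s(v, w₁) ∈ F

def Rule5Applies (T : SimpleGraph V) (F : Set (Sym2 V)) : Prop :=
  ∃ f u v z w₁ w₂ w₃ : V,
    v ∈ leavesOf T ∧ T.Adj u w₃ ∧ OnPath T u f w₃ ∧ T.Adj w₂ w₃ ∧ T.Adj v z ∧ IsFPair T u f ∧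
    z ∈ Dstar T ∧ FLinks T u f v ∧ OnPath T u f w₁ ∧ w₁ ≠ w₂ ∧ s(v, w₁) ∈ F ∧ FLinks T w₁ w₂ f

section Rules

variable {F : Set (Sym2 V)}

lemma IsFPair.rule2Applies (hT : T.IsAcyclic) (hux : IsFPair T u x) (hw : OnPathInt T x u w)
    (hxw : ¬T.Adj x w) (hF : s(x, w) ∈ F) : Rule2Applies T F := by
  obtain ⟨c, hxc, hc, huniq⟩ := hT.exists_adj_onPath hux.2.1.symm hux.1.symm
  have hcw : OnPath T c u w := (hw.1.left_or_right c).resolve_left fun h => by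
    rcases h.eq_or_eq_of_adj hxc with h | rfl
    exacts [hw.2.1 h, hxw hxc]
  refine ⟨u, x, w, c, ?_, ?_, hw.2.2.symm, hux, hxc, hc, huniq, hcw, hF⟩
  · rintro rfl
    exact hxw hxc
  · rintro rfl
    rcases hw.1.eq_or_eq_of_adj hxc with h | h
    exacts [hw.2.1 h, hw.2.2 h]

lemma IsFPair.rule2Applies_of_onPath (hT : T.IsAcyclic) (hab : IsFPair T a b)
    (hw : OnPathInt T a b w) (hx : OnPath T a b x) (hxw : x ≠ w) (hnadj : ¬T.Adj x w)
    (hF : s(x, w) ∈ F) : Rule2Applies T F := by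
  rcases hw.1.left_or_right x with h | h
  · have hxa : x ≠ a := by
      rintro rfl
      exact hw.2.1 h.eq_of_self
    exact (hab.of_onPath hx hxa).rule2Applies hT ⟨h.symm, hxw.symm, hw.2.1⟩ hnadj hF
  · have hxb : x ≠ b := by
      rintro rfl
      exact hw.2.2 h.symm.eq_of_self
    exact (hab.symm.of_onPath hx.symm hxb).rule2Applies hT ⟨h, hxw.symm, hw.2.2⟩ hnadj hF

lemma IsFPair.rule3Applies [Finite V] (hT : T.IsAcyclic) (hab : IsFPair T a b)
    (hw : OnPathInt T a b w) (haw : ¬T.Adj a w) (hx : ¬OnPath T a b x) (hxl : x ∉ leavesOf T)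
    (hxwa : OnPath T x w a) (hF : s(x, w) ∈ F) : Rule3Applies T F := by
  obtain ⟨y, hwy, hy, -⟩ := hT.exists_adj_onPath (hw.1.reachable_left hab.2.1).symm hw.2.1
  have hya : y ≠ a := by
    rintro rfl
    exact haw hwy.symm
  have hyb : y ≠ b := by
    rintro rfl
    exact hw.2.2 (hw.1.eq_of_onPath hy.symm hab.2.1).symm
  have hcard : ({a, y, w, b} : Set V).ncard = 4 := by
    rw [Set.ncard_insert_of_notMem, Set.ncard_insert_of_notMem, Set.ncard_pair hw.2.2]
    · simp [hwy.ne.symm, hyb]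
    · simp [hya.symm, hw.2.1.symm, hab.1]
  have hsub : ({a, y, w, b} : Set V) ⊆ {y | OnPath T a b y} := by
    rintro _ (rfl | rfl | rfl | rfl)
    exacts [.left _ _, hw.1.trans_left hy.symm, hw.1, .right _ _]
  refine ⟨a, b, x, w, y, hab, hcard ▸ Set.ncard_le_ncard hsub, fun h => h.elim hxl hx, hw,
    ⟨hw.1.trans_left hy.symm, hya, hyb⟩, hwy, hF, hxwa.trans_right hy.symm⟩

lemma IsFPair.rule4Applies (hab : IsFPair T a b) (ha : a ∉ D2 T) (hw : OnPathInt T a b w)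
    (hbxa : OnPath T b x a) (hxa : x ≠ a) (hxb : x ≠ b) (hr : T.Reachable x a)
    (hz : T.neighborSet x = {z}) (hz2 : z ∈ D2 T) (hF : s(x, w) ∈ F) : Rule4Applies T F := by
  obtain ⟨y, hy, -, hyx⟩ := exists_isFPair_of_notMem_D2 hr hxa ha
  have hbya : OnPath T b y a := by
    rcases hbxa.left_or_right y with h | h
    · exact h
    · obtain rfl := hy.eq_of_onPath h.symm hr
      exact .right b a
  exact ⟨b, a, x, y, w, z, by simp [leavesOf, hz], hxb, hz2, hz, hab, hyx, hbya, hw, hF⟩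

lemma IsFPair.rule5Applies (hT : T.IsAcyclic) (hab : IsFPair T a b) (hw : OnPathInt T a b w)
    (hbxa : OnPath T b x a) (hz : T.neighborSet x = {z}) (hz3 : z ∈ Dstar T) (hF : s(x, w) ∈ F) :
    Rule5Applies T F := by
  obtain ⟨c, hac, hc, -⟩ := hT.exists_adj_onPath hab.2.1 hab.1
  have hxz : z ∈ T.neighborSet x := by rw [hz]; rfl
  exact ⟨b, a, x, z, w, a, c, by simp [leavesOf, hz], hac, hc, hac, hxz, hab, hz3, hbxa, hw.1,
    hw.2.1, hF, hw.1⟩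

lemma IsFPair.rule3Applies_or_rule4Applies_or_rule5Applies [Finite V] (hT : T.IsAcyclic)
    (hab : IsFPair T a b) (ha : a ∉ D2 T) (hw : OnPathInt T a b w) (haw : ¬T.Adj a w)
    (hx : ¬OnPath T a b x) (hxw : ¬T.Adj x w) (hr : T.Reachable x w) (hxwa : OnPath T x w a)
    (hF : s(x, w) ∈ F) : Rule3Applies T F ∨ Rule4Applies T F ∨ Rule5Applies T F := by
  have hxa : x ≠ a := by
    rintro rfl
    exact hx (.left x b)
  have hxb : x ≠ b := by
    rintro rfl
    exact hx (.right a x)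
  have hbxa : OnPath T b x a := by
    refine ((hxwa.left_or_right b).resolve_right fun h => hw.2.1 ?_).symm
    exact (hw.1.symm.eq_of_onPath h hab.2.1.symm).symm
  by_cases hxl : x ∈ leavesOf T
  swap
  · exact .inl (hab.rule3Applies hT hw haw hx hxl hxwa hF)
  obtain ⟨z, hz⟩ := Set.ncard_eq_one.1 hxl
  by_cases hz2 : z ∈ D2 T
  · exact .inr (.inl (hab.rule4Applies ha hw hbxa hxa hxb (hxwa.reachable_left hr) hz hz2 hF))
  have hxz : z ∈ T.neighborSet x := by rw [hz]; rfl
  have hxw' : x ≠ w := by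
    rintro rfl
    exact hxa hxwa.eq_of_self.symm
  have hzw : OnPathInt T x w z :=
    ⟨onPath_of_neighborSet_eq_singleton hz hxw', hxz.ne', fun h => hxw (h ▸ hxz)⟩
  have h2 := hT.two_le_ncard_neighborSet hr hzw
  have hz3 : z ∈ Dstar T := show 3 ≤ (T.neighborSet z).ncard by
    have : (T.neighborSet z).ncard ≠ 2 := hz2
    omega
  exact .inr (.inr (hab.rule5Applies hT hw hbxa hz hz3 hF))

end Rules

end

theorem stmt8_general (V : Type) [Fintype V] (G : SimpleGraph V)
    (F : Set (Sym2 V)) (hF : IsMinFES G F)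
    (hrule2 : ¬ ∃ u f w₁ w₂ : V,
        w₁ ≠ w₂ ∧ w₂ ≠ u ∧ u ≠ w₁ ∧
        IsFPair (G.deleteEdges F) u f ∧
        (G.deleteEdges F).Adj f w₂ ∧
        FLinks (G.deleteEdges F) w₂ f u ∧
        (∀ w, (G.deleteEdges F).Adj f w → FLinks (G.deleteEdges F) w f u → w = w₂) ∧
        FLinks (G.deleteEdges F) w₁ w₂ u ∧
        s(f, w₁) ∈ F)
    (hrule3 : ¬ ∃ u f v w₁ w₂ : V,
        IsFPair (G.deleteEdges F) u f ∧
        4 ≤ {w : V | OnPath (G.deleteEdges F) u f w}.ncard ∧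
        v ∉ leavesOf (G.deleteEdges F) ∪ {w : V | OnPath (G.deleteEdges F) u f w} ∧
        OnPathInt (G.deleteEdges F) u f w₁ ∧
        OnPathInt (G.deleteEdges F) u f w₂ ∧
        (G.deleteEdges F).Adj w₁ w₂ ∧
        s(v, w₁) ∈ F ∧
        FLinks (G.deleteEdges F) w₂ v w₁)
    (hrule4 : ¬ ∃ f u v z w₁ w₂ : V,
        v ∈ leavesOf (G.deleteEdges F) ∧ v ≠ f ∧
        w₂ ∈ D2 (G.deleteEdges F) ∧
        (G.deleteEdges F).neighborSet v = {w₂} ∧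
        IsFPair (G.deleteEdges F) u f ∧
        IsFPair (G.deleteEdges F) z v ∧
        FLinks (G.deleteEdges F) u f z ∧
        OnPathInt (G.deleteEdges F) u f w₁ ∧
        s(v, w₁) ∈ F)
    (hrule5 : ¬ ∃ f u v z w₁ w₂ w₃ : V,
        v ∈ leavesOf (G.deleteEdges F) ∧
        (G.deleteEdges F).Adj u w₃ ∧
        OnPath (G.deleteEdges F) u f w₃ ∧
        (G.deleteEdges F).Adj w₂ w₃ ∧
        (G.deleteEdges F).Adj v z ∧
        IsFPair (G.deleteEdges F) u f ∧
        z ∈ Dstar (G.deleteEdges F) ∧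
        FLinks (G.deleteEdges F) u f v ∧
        OnPath (G.deleteEdges F) u f w₁ ∧ w₁ ≠ w₂ ∧
        s(v, w₁) ∈ F ∧
        FLinks (G.deleteEdges F) w₁ w₂ f) :
    ∀ a b : V, IsFPair (G.deleteEdges F) a b →
      a ∉ D2 (G.deleteEdges F) → b ∉ D2 (G.deleteEdges F) →
      5 ≤ {w : V | OnPathInt (G.deleteEdges F) a b w}.ncard →
      ∀ w : V, OnPathInt (G.deleteEdges F) a b w →
        3 ≤ (G.deleteEdges F).dist a w → 3 ≤ (G.deleteEdges F).dist b w →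
        (G.neighborSet w).ncard = ((G.deleteEdges F).neighborSet w).ncard := by
  intro a b hab ha hb _ w hw hda hdb
  have hT : (G.deleteEdges F).IsAcyclic := hF.1.2
  have hnadj : ∀ {u}, 3 ≤ (G.deleteEdges F).dist u w → ¬(G.deleteEdges F).Adj u w :=
    fun hd hadj => by rw [← dist_eq_one_iff_adj] at hadj; omega
  suffices hwF : ∀ x, s(w, x) ∉ F by
    congr 1
    ext x
    simp [hwF x]
  intro x hx
  have hx' : s(x, w) ∈ F := Sym2.eq_swap ▸ hx
  have hxw : ¬(G.deleteEdges F).Adj x w := fun h => (deleteEdges_adj.1 h).2 hx'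
  have hr : (G.deleteEdges F).Reachable x w := hF.reachable_of_mem hx'
  by_cases hxp : OnPath (G.deleteEdges F) a b x
  · exact hrule2 (hab.rule2Applies_of_onPath hT hw hxp (G.mem_edgeSet.1 (hF.1.1 hx)).ne' hxw hx')
  have h345 := (hab.onPath_or_onPath_of_not_onPath hT hw.1 hxp hr.symm).elim
    (hab.rule3Applies_or_rule4Applies_or_rule5Applies hT ha hw (hnadj hda) hxp hxw hr · hx')
    (hab.symm.rule3Applies_or_rule4Applies_or_rule5Applies hT hb hw.symm (hnadj hdb)
      (fun h => hxp h.symm) hxw hr · hx')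
  rcases h345 with h | h | h
  exacts [hrule3 h, hrule4 h, hrule5 h]

/-- If none of the single-edge swaps of Reduction Rules 2–5 is applicable to
the minimum feedback edge set `F`, then every internal vertex `w` of the path
between an `F`-pair `a, b` (with `a, b ∉ D_2` and at least five internal
vertices) lying at distance at least three in `T(F)` from both endpoints has
the same degree in `G` as in `T(F)`. -/
theorem stmt8 (V : Type) [Fintype V] (G : SimpleGraph V) (hconn : G.Connected)
    (F : Set (Sym2 V)) (hF : IsMinFES G F)
    (hrule2 : ¬ ∃ u f w₁ w₂ : V,
        w₁ ≠ w₂ ∧ w₂ ≠ u ∧ u ≠ w₁ ∧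
        IsFPair (G.deleteEdges F) u f ∧
        (G.deleteEdges F).Adj f w₂ ∧
        FLinks (G.deleteEdges F) w₂ f u ∧
        (∀ w, (G.deleteEdges F).Adj f w → FLinks (G.deleteEdges F) w f u → w = w₂) ∧
        FLinks (G.deleteEdges F) w₁ w₂ u ∧
        s(f, w₁) ∈ F)
    (hrule3 : ¬ ∃ u f v w₁ w₂ : V,
        IsFPair (G.deleteEdges F) u f ∧
        4 ≤ {w : V | OnPath (G.deleteEdges F) u f w}.ncard ∧
        v ∉ leavesOf (G.deleteEdges F) ∪ {w : V | OnPath (G.deleteEdges F) u f w} ∧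
        OnPathInt (G.deleteEdges F) u f w₁ ∧
        OnPathInt (G.deleteEdges F) u f w₂ ∧
        (G.deleteEdges F).Adj w₁ w₂ ∧
        s(v, w₁) ∈ F ∧
        FLinks (G.deleteEdges F) w₂ v w₁)
    (hrule4 : ¬ ∃ f u v z w₁ w₂ : V,
        v ∈ leavesOf (G.deleteEdges F) ∧ v ≠ f ∧
        w₂ ∈ D2 (G.deleteEdges F) ∧
        (G.deleteEdges F).neighborSet v = {w₂} ∧
        IsFPair (G.deleteEdges F) u f ∧
        IsFPair (G.deleteEdges F) z v ∧
        FLinks (G.deleteEdges F) u f z ∧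
        OnPathInt (G.deleteEdges F) u f w₁ ∧
        s(v, w₁) ∈ F)
    (hrule5 : ¬ ∃ f u v z w₁ w₂ w₃ : V,
        v ∈ leavesOf (G.deleteEdges F) ∧
        (G.deleteEdges F).Adj u w₃ ∧
        OnPath (G.deleteEdges F) u f w₃ ∧
        (G.deleteEdges F).Adj w₂ w₃ ∧
        (G.deleteEdges F).Adj v z ∧
        IsFPair (G.deleteEdges F) u f ∧
        z ∈ Dstar (G.deleteEdges F) ∧
        FLinks (G.deleteEdges F) u f v ∧
        OnPath (G.deleteEdges F) u f w₁ ∧ w₁ ≠ w₂ ∧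
        s(v, w₁) ∈ F ∧
        FLinks (G.deleteEdges F) w₁ w₂ f) :
    ∀ a b : V, IsFPair (G.deleteEdges F) a b →
      a ∉ D2 (G.deleteEdges F) → b ∉ D2 (G.deleteEdges F) →
      5 ≤ {w : V | OnPathInt (G.deleteEdges F) a b w}.ncard →
      ∀ w : V, OnPathInt (G.deleteEdges F) a b w →
        3 ≤ (G.deleteEdges F).dist a w → 3 ≤ (G.deleteEdges F).dist b w →
        (G.neighborSet w).ncard = ((G.deleteEdges F).neighborSet w).ncard :=
  stmt8_general V G F hF hrule2 hrule3 hrule4 hrule5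
end

section
/- Let G be a connected graph, K ⊆ V(G), F a minimum feedback edge set of G, and let u, f be a strict F-pair, i.e., an F-pair such that every vertex of P*_F(u,f) has degree 2 in G. Suppose w_1 and w_2 are adjacent vertices of P*_F(u,f) with either {w_1, w_2} ⊆ K or {w_1, w_2} ∩ K = ∅. Let G' be the graph obtained from G by deleting w_1 and w_2 and adding a new vertex w* adjacent to all vertices of (N_G(w_1) ∪ N_G(w_2)) ∖ {w_1, w_2}, and let K' = (K ∖ {w_1, w_2}) ∪ {w*} if w_1, w_2 ∈ K and K' = K otherwise. Then there exists a set S with K ⊆ S ⊆ V(G) and G[S] a tree if and only if there exists a set S' with K' ⊆ S' ⊆ V(G') and G'[S'] a tree. -/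
open SimpleGraph

/-- `u, f` form a strict `F`-pair: an `F`-pair all of whose internal path
vertices have degree exactly two in `G` itself. -/
def IsStrictFPair {V : Type} (G : SimpleGraph V) (F : Set (Sym2 V)) (u f : V) : Prop :=
  IsFPair (G.deleteEdges F) u f ∧
    ∀ w, OnPathInt (G.deleteEdges F) u f w → (G.neighborSet w).ncard = 2

/-- The graph `G'` of Reduction Rule 6: delete `w₁` and `w₂` and add a new
vertex `w*` (the `Sum.inr` vertex) adjacent to all vertices of
`(N_G(w₁) ∪ N_G(w₂)) \ {w₁, w₂}`. -/
def glueGraph {V : Type} (G : SimpleGraph V) (w₁ w₂ : V) :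
    SimpleGraph ({x : V // x ≠ w₁ ∧ x ≠ w₂} ⊕ Unit) :=
  SimpleGraph.fromRel (fun a b =>
    match a, b with
    | Sum.inl x, Sum.inl y => G.Adj x.1 y.1
    | Sum.inl x, Sum.inr _ => G.Adj x.1 w₁ ∨ G.Adj x.1 w₂
    | Sum.inr _, _ => False)

/-!
Both `w₁` and `w₂` have degree two in `G` and in the forest `G - F`, so they have no common
neighbour: it would close a triangle in `G - F`. Glueing them is therefore the contraction of an
edge that lies on no triangle. Such a contraction preserves and reflects connectivity and loses
exactly one vertex and one edge, so it preserves and reflects being a tree, since a finite graph is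
a tree iff it is connected with `|E| + 1 = |V|`. Hence an induced subgraph containing both `w₁`
and `w₂` is a tree iff its image in `G'` is, and one containing neither is isomorphic to its image.
An induced tree containing exactly one of them, say `w₁`, contains no terminal among `w₁, w₂`,
and `w₁` is a leaf of it (or its only vertex), so `w₁` can be dropped.
-/

namespace SimpleGraph

variable {V α β : Type*} {G : SimpleGraph V}

lemma neighborSet_inter_subsingleton {v w : V} {S : Set V} (hdeg : (G.neighborSet v).ncard = 2)
    (hvw : G.Adj v w) (hw : w ∉ S) : (G.neighborSet v ∩ S).Subsingleton := by
  obtain ⟨t, ht⟩ := Set.ncard_eq_one.1 <| by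
    rw [Set.ncard_sdiff_singleton_of_mem (s := G.neighborSet v) hvw, hdeg]
  refine (Set.subsingleton_singleton (a := t)).anti ?_
  rw [← ht]
  exact fun x hx => ⟨hx.1, fun e => hw (Set.mem_singleton_iff.1 e ▸ hx.2)⟩

lemma isTree_induce_diff_singleton {S : Set V} {v : V}
    (hS : (G.induce S).IsTree) (hv : v ∈ S) (hleaf : (G.neighborSet v ∩ S).Subsingleton)
    (hne : (S \ {v}).Nonempty) : (G.induce (S \ {v})).IsTree := by
  have : Nonempty ↥(S \ {v}) := hne.to_subtype
  refine ⟨(SimpleGraph.connected_iff _).2 ⟨?_, this⟩,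
    hS.isAcyclic.embedding (G.induceHomOfLE Set.sdiff_subset)⟩
  have hpre := hS.connected.preconnected.induce_of_degree_eq_one (s := {⟨v, hv⟩}ᶜ) <| by
    rintro _ hw y₁ hy₁ y₂ hy₂
    rw [Set.notMem_compl_iff, Set.mem_singleton_iff] at hw
    subst hw
    exact Subtype.ext (hleaf ⟨hy₁, y₁.2⟩ ⟨hy₂, y₂.2⟩)
  refine hpre.map (induceHom (s := {⟨v, hv⟩}ᶜ) (t := S \ {v}) (Embedding.induce S).toHom
    fun x hx => ⟨x.2, fun e => hx (Subtype.ext (Set.mem_singleton_iff.1 e))⟩) ?_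
  rintro ⟨x, hxS, hxv⟩
  exact ⟨⟨⟨x, hxS⟩, fun e => hxv (congrArg Subtype.val e)⟩, rfl⟩

structure IsEdgeContraction (H : SimpleGraph α) (H' : SimpleGraph β) (c : α → β) (x₀ y₀ : α) :
    Prop where
  adj : H.Adj x₀ y₀
  map_eq : c x₀ = c y₀
  injOn : Set.InjOn c {y₀}ᶜ
  surjective : Function.Surjective c
  map_adj : ∀ ⦃x y⦄, H.Adj x y → c x ≠ c y → H'.Adj (c x) (c y)
  exists_adj : ∀ ⦃p q⦄, H'.Adj p q → ∃ x y, H.Adj x y ∧ c x = p ∧ c y = q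

namespace IsEdgeContraction

variable {H : SimpleGraph α} {H' : SimpleGraph β} {c : α → β} {x₀ y₀ : α}

lemma map_eq_map_iff (h : IsEdgeContraction H H' c x₀ y₀) {x y : α} :
    c x = c y ↔ x = y ∨ s(x, y) = s(x₀, y₀) := by
  refine ⟨fun hxy => ?_, ?_⟩
  · have hne : x₀ ≠ y₀ := h.adj.ne
    by_cases hx : x = y₀ <;> by_cases hy : y = y₀
    · exact .inl (hx.trans hy.symm)
    · subst hx
      have := h.injOn hy hne (hxy.symm.trans h.map_eq.symm)
      exact .inr (by rw [this, Sym2.eq_swap])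
    · subst hy
      have := h.injOn hx hne (hxy.trans h.map_eq.symm)
      exact .inr (by rw [this])
    · exact .inl (h.injOn hx hy hxy)
  · rintro (rfl | hs)
    · rfl
    · rcases Sym2.eq_iff.1 hs with ⟨rfl, rfl⟩ | ⟨rfl, rfl⟩
      exacts [h.map_eq, h.map_eq.symm]

lemma reachable_of_map_eq (h : IsEdgeContraction H H' c x₀ y₀) {x y : α} (hxy : c x = c y) :
    H.Reachable x y := by
  rcases h.map_eq_map_iff.1 hxy with rfl | hs
  · rfl
  · exact (H.mem_edgeSet.1 (hs ▸ h.adj : s(x, y) ∈ H.edgeSet)).reachable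

lemma reachable_map (h : IsEdgeContraction H H' c x₀ y₀) {x y : α} (hxy : H.Reachable x y) :
    H'.Reachable (c x) (c y) := by
  obtain ⟨p⟩ := hxy
  induction p with
  | nil => rfl
  | @cons x z y hxz _ ih =>
    by_cases hc : c x = c z
    · exact hc ▸ ih
    · exact (h.map_adj hxz hc).reachable.trans ih

lemma reachable_of_reachable_map (h : IsEdgeContraction H H' c x₀ y₀) {x y : α}
    (hxy : H'.Reachable (c x) (c y)) : H.Reachable x y := by
  obtain ⟨p⟩ := hxy
  suffices ∀ {p q : β} (w : H'.Walk p q) (x y : α), c x = p → c y = q → H.Reachable x y from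
    this p x y rfl rfl
  intro p q w
  induction w with
  | nil => exact fun x y hx hy => h.reachable_of_map_eq (hx.trans hy.symm)
  | cons hpq _ ih =>
    intro x y hx hy
    obtain ⟨x', y', hadj, rfl, rfl⟩ := h.exists_adj hpq
    exact (h.reachable_of_map_eq hx).trans (hadj.reachable.trans (ih y' y rfl hy))

lemma connected_iff (h : IsEdgeContraction H H' c x₀ y₀) : H.Connected ↔ H'.Connected := by
  simp only [SimpleGraph.connected_iff]
  refine ⟨fun ⟨hH, _⟩ => ⟨fun p q => ?_, ⟨c x₀⟩⟩, fun ⟨hH', _⟩ => ⟨fun x y => ?_, ⟨x₀⟩⟩⟩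
  · obtain ⟨x, rfl⟩ := h.surjective p
    obtain ⟨y, rfl⟩ := h.surjective q
    exact h.reachable_map (hH x y)
  · exact h.reachable_of_reachable_map (hH' _ _)

lemma natCard_eq_add_one [Finite α] (h : IsEdgeContraction H H' c x₀ y₀) :
    Nat.card α = Nat.card β + 1 := by
  have himage : c '' (Set.univ \ {y₀}) = Set.univ := by
    refine Set.eq_univ_of_forall fun p => ?_
    obtain ⟨x, rfl⟩ := h.surjective p
    by_cases hx : x = y₀
    · exact ⟨x₀, ⟨trivial, h.adj.ne⟩, hx ▸ h.map_eq⟩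
    · exact ⟨x, ⟨trivial, hx⟩, rfl⟩
  have hinj : Set.InjOn c (Set.univ \ {y₀}) := fun x hx y hy => h.injOn hx.2 hy.2
  rw [← Set.ncard_univ, ← Set.ncard_univ, ← himage, hinj.ncard_image,
    Set.ncard_sdiff_singleton_add_one (Set.mem_univ y₀)]

lemma eq_and_eq_of_map_eq (h : IsEdgeContraction H H' c x₀ y₀)
    (hno : ∀ z, H.Adj x₀ z → ¬ H.Adj y₀ z) {x y x' y' : α}
    (hxy : H.Adj x y) (hx'y' : H.Adj x' y') (hne : s(x, y) ≠ s(x₀, y₀))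
    (hne' : s(x', y') ≠ s(x₀, y₀)) (hx : c x = c x') (hy : c y = c y') : x = x' ∧ y = y' := by
  rw [h.map_eq_map_iff] at hx hy
  rcases hx with rfl | hx <;> rcases hy with rfl | hy
  · exact ⟨rfl, rfl⟩
  · rcases Sym2.eq_iff.1 hy with ⟨rfl, rfl⟩ | ⟨rfl, rfl⟩
    · exact absurd hx'y'.symm (hno x hxy.symm)
    · exact absurd hxy.symm (hno x hx'y'.symm)
  · rcases Sym2.eq_iff.1 hx with ⟨rfl, rfl⟩ | ⟨rfl, rfl⟩
    · exact absurd hx'y' (hno y hxy)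
    · exact absurd hxy (hno y hx'y')
  · rcases Sym2.eq_iff.1 hx with ⟨rfl, rfl⟩ | ⟨rfl, rfl⟩ <;>
      rcases Sym2.eq_iff.1 hy with ⟨rfl, rfl⟩ | ⟨rfl, rfl⟩
    · exact absurd hxy (H.loopless.irrefl _)
    · exact absurd rfl hne
    · exact absurd Sym2.eq_swap hne
    · exact absurd hxy (H.loopless.irrefl _)

lemma image_edgeSet (h : IsEdgeContraction H H' c x₀ y₀) :
    Sym2.map c '' (H.edgeSet \ {s(x₀, y₀)}) = H'.edgeSet := by
  ext e
  induction e using Sym2.ind with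
  | _ p q =>
  constructor
  · rintro ⟨e, ⟨he, hne⟩, hpq⟩
    induction e using Sym2.ind with
    | _ x y =>
    rw [Sym2.map_mk] at hpq
    rw [← hpq, mem_edgeSet]
    refine h.map_adj he fun hxy => hne ?_
    exact (h.map_eq_map_iff.1 hxy).resolve_left he.ne
  · intro hpq
    obtain ⟨x, y, hxy, rfl, rfl⟩ := h.exists_adj hpq
    refine ⟨s(x, y), ⟨hxy, fun hs => hpq.ne ?_⟩, Sym2.map_mk c x y⟩
    exact h.map_eq_map_iff.2 (.inr hs)

lemma injOn_edgeSet (h : IsEdgeContraction H H' c x₀ y₀) (hno : ∀ z, H.Adj x₀ z → ¬ H.Adj y₀ z) :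
    Set.InjOn (Sym2.map c) (H.edgeSet \ {s(x₀, y₀)}) := by
  intro e he e' he' hee'
  induction e using Sym2.ind with
  | _ x y =>
  induction e' using Sym2.ind with
  | _ x' y' =>
  obtain ⟨hxy, hne⟩ := he
  obtain ⟨hx'y', hne'⟩ := he'
  simp only [Sym2.map_mk, Sym2.eq_iff] at hee'
  rcases hee' with ⟨hx, hy⟩ | ⟨hx, hy⟩
  · obtain ⟨rfl, rfl⟩ := h.eq_and_eq_of_map_eq hno hxy hx'y' hne hne' hx hy
    rfl
  · obtain ⟨rfl, rfl⟩ := h.eq_and_eq_of_map_eq hno hxy hx'y'.symm hne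
      (by rwa [Sym2.eq_swap]) hx hy
    exact Sym2.eq_swap

lemma natCard_edgeSet_eq_add_one [Finite α] (h : IsEdgeContraction H H' c x₀ y₀)
    (hno : ∀ z, H.Adj x₀ z → ¬ H.Adj y₀ z) : Nat.card H.edgeSet = Nat.card H'.edgeSet + 1 := by
  rw [Nat.card_coe_set_eq, Nat.card_coe_set_eq, ← h.image_edgeSet,
    (h.injOn_edgeSet hno).ncard_image, Set.ncard_sdiff_singleton_add_one (H.mem_edgeSet.2 h.adj)]

lemma isTree_iff [Finite α] (h : IsEdgeContraction H H' c x₀ y₀)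
    (hno : ∀ z, H.Adj x₀ z → ¬ H.Adj y₀ z) : H.IsTree ↔ H'.IsTree := by
  have : Finite β := Finite.of_surjective c h.surjective
  rw [isTree_iff_connected_and_card, isTree_iff_connected_and_card, h.connected_iff,
    h.natCard_eq_add_one, h.natCard_edgeSet_eq_add_one hno, add_left_inj]

lemma induce (h : IsEdgeContraction H H' c x₀ y₀) {S : Set α} (hx₀ : x₀ ∈ S) (hy₀ : y₀ ∈ S) :
    IsEdgeContraction (H.induce S) (H'.induce (c '' S)) (S.imageFactorization c)
      ⟨x₀, hx₀⟩ ⟨y₀, hy₀⟩ where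
  adj := h.adj
  map_eq := Subtype.ext h.map_eq
  injOn x hx y hy hxy :=
    Subtype.ext <| h.injOn (fun e => hx (Subtype.ext e)) (fun e => hy (Subtype.ext e))
      (congrArg Subtype.val hxy)
  surjective := Set.imageFactorization_surjective
  map_adj x y hxy hne := h.map_adj hxy fun e => hne (Subtype.ext e)
  exists_adj := by
    have hmem : ∀ {x x'}, x ∈ S → c x' = c x → x' ∈ S := fun hx hx' => by
      rcases h.map_eq_map_iff.1 hx' with rfl | hs
      · exact hx
      · rcases Sym2.eq_iff.1 hs with ⟨rfl, -⟩ | ⟨rfl, -⟩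
        exacts [hx₀, hy₀]
    rintro ⟨_, x, hx, rfl⟩ ⟨_, y, hy, rfl⟩ hadj
    obtain ⟨x', y', hadj', hx', hy'⟩ := h.exists_adj hadj
    exact ⟨⟨x', hmem hx hx'⟩, ⟨y', hmem hy hy'⟩, hadj', Subtype.ext hx', Subtype.ext hy'⟩

noncomputable def induceIso (h : IsEdgeContraction H H' c x₀ y₀) {S : Set α} (hx₀ : x₀ ∉ S)
    (hy₀ : y₀ ∉ S) : H.induce S ≃g H'.induce (c '' S) where
  toEquiv := Equiv.Set.imageOfInjOn c S fun x hx y hy =>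
    h.injOn (ne_of_mem_of_not_mem hx hy₀) (ne_of_mem_of_not_mem hy hy₀)
  map_rel_iff' := by
    rintro ⟨x, hx⟩ ⟨y, hy⟩
    show H'.Adj (c x) (c y) ↔ H.Adj x y
    have hfib : ∀ {x x'}, x ∈ S → c x' = c x → x' = x := fun hx hx' => by
      rcases h.map_eq_map_iff.1 hx' with rfl | hs
      · rfl
      · rcases Sym2.eq_iff.1 hs with ⟨-, rfl⟩ | ⟨-, rfl⟩
        exacts [absurd hx hy₀, absurd hx hx₀]
    refine ⟨fun hxy => ?_, fun hxy => h.map_adj hxy fun e => hxy.ne (hfib hy e)⟩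
    obtain ⟨x', y', hadj, hx', hy'⟩ := h.exists_adj hxy
    rwa [← hfib hx hx', ← hfib hy hy']

lemma isTree_induce_iff [Finite α] (h : IsEdgeContraction H H' c x₀ y₀)
    (hno : ∀ z, H.Adj x₀ z → ¬ H.Adj y₀ z) {S : Set α} (hS : x₀ ∈ S ↔ y₀ ∈ S) :
    (H.induce S).IsTree ↔ (H'.induce (c '' S)).IsTree := by
  by_cases hx₀ : x₀ ∈ S
  · exact (h.induce hx₀ (hS.1 hx₀)).isTree_iff fun z => hno z
  · exact (h.induceIso hx₀ (mt hS.2 hx₀)).isTree_iff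

lemma exists_isTree_of_leaf (h : IsEdgeContraction H H' c x₀ y₀) {S T : Set α} {v w : α}
    (hS : (H.induce S).IsTree) (hv : v ∈ S) (hw : w ∉ S) (hvw : s(v, w) = s(x₀, y₀))
    (hleaf : (H.neighborSet v ∩ S).Subsingleton) (hT : T ⊆ S \ {v}) :
    ∃ S', c '' T ⊆ S' ∧ (H'.induce S').IsTree := by
  rcases (S \ {v}).eq_empty_or_nonempty with hempty | hne
  · refine ⟨{c v}, ?_, IsTree.of_subsingleton⟩
    rw [hempty, Set.subset_empty_iff] at hT
    simp [hT]
  · have hx₀y₀ : x₀ ∉ S \ {v} ∧ y₀ ∉ S \ {v} := by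
      rcases Sym2.eq_iff.1 hvw with ⟨rfl, rfl⟩ | ⟨rfl, rfl⟩
      exacts [⟨fun h => h.2 rfl, fun h => hw h.1⟩, ⟨fun h => hw h.1, fun h => h.2 rfl⟩]
    exact ⟨c '' (S \ {v}), Set.image_mono hT, (h.induceIso hx₀y₀.1 hx₀y₀.2).isTree_iff.1
      (isTree_induce_diff_singleton hS hv hleaf hne)⟩

end IsEdgeContraction

end SimpleGraph

section Glue

variable {V : Type} {G : SimpleGraph V} {w₁ w₂ : V}

open Classical in
noncomputable def glueMap (w₁ w₂ x : V) : {x : V // x ≠ w₁ ∧ x ≠ w₂} ⊕ Unit :=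
  if h : x ≠ w₁ ∧ x ≠ w₂ then .inl ⟨x, h⟩ else .inr ()

lemma isEdgeContraction_glueMap (h : G.Adj w₁ w₂) :
    G.IsEdgeContraction (glueGraph G w₁ w₂) (glueMap w₁ w₂) w₁ w₂ where
  adj := h
  map_eq := by simp [glueMap]
  injOn x hx y hy hxy := by
    simp only [Set.mem_compl_iff, Set.mem_singleton_iff] at hx hy
    unfold glueMap at hxy
    split_ifs at hxy <;> simp_all
  surjective := by
    rintro (⟨x, hx⟩ | ⟨⟩)
    · exact ⟨x, dif_pos hx⟩
    · exact ⟨w₁, dif_neg (by simp)⟩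
  map_adj x y hxy hne := by
    unfold glueMap at hne ⊢
    split_ifs at hne ⊢ with hx hy hy
    · simp [glueGraph, hxy, hxy.ne]
    · obtain rfl | rfl : y = w₁ ∨ y = w₂ := by tauto
      all_goals simp [glueGraph, hxy]
    · obtain rfl | rfl : x = w₁ ∨ x = w₂ := by tauto
      all_goals simp [glueGraph, hxy.symm]
    · exact absurd rfl hne
  exists_adj := by
    rintro (⟨p, hp⟩ | ⟨⟩) (⟨q, hq⟩ | ⟨⟩) hpq <;>
      simp only [glueGraph, fromRel_adj, ne_eq, Sum.inl.injEq, reduceCtorEq, not_false_eq_true,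
        or_false, false_or, true_and, SimpleGraph.irrefl] at hpq
    · exact ⟨p, q, hpq.2.elim id .symm, dif_pos hp, dif_pos hq⟩
    · rcases hpq with hpq | hpq
      · exact ⟨p, w₁, hpq, dif_pos hp, dif_neg (by simp)⟩
      · exact ⟨p, w₂, hpq, dif_pos hp, dif_neg (by simp)⟩
    · rcases hpq with hpq | hpq
      · exact ⟨w₁, q, hpq.symm, dif_neg (by simp), dif_pos hq⟩
      · exact ⟨w₂, q, hpq.symm, dif_neg (by simp), dif_pos hq⟩

lemma glueMap_eq_inl_iff {x : V} {y : {x : V // x ≠ w₁ ∧ x ≠ w₂}} :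
    glueMap w₁ w₂ x = .inl y ↔ x = y.1 := by
  unfold glueMap
  split_ifs with h
  · simp [Subtype.ext_iff]
  · simp only [false_iff]
    rintro rfl
    exact h y.2

lemma glueMap_eq_inr_iff {x : V} : glueMap w₁ w₂ x = .inr () ↔ x = w₁ ∨ x = w₂ := by
  unfold glueMap
  split_ifs with h <;> simp only [false_iff] <;> tauto

lemma image_glueMap {K : Set V} (hK : (w₁ ∈ K ∧ w₂ ∈ K) ∨ (w₁ ∉ K ∧ w₂ ∉ K)) :
    glueMap w₁ w₂ '' K = {z | (∃ x, z = .inl x ∧ x.1 ∈ K) ∨ (z = .inr () ∧ w₁ ∈ K)} := by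
  ext z
  rcases z with x | u
  · simp only [Set.mem_image, glueMap_eq_inl_iff, Set.mem_ofPred_eq]
    simp
  · cases u
    simp only [Set.mem_image, glueMap_eq_inr_iff, Set.mem_ofPred_eq]
    grind

lemma IsStrictFPair.neighborSet_deleteEdges_eq {u f w : V} {F : Set (Sym2 V)}
    (hpair : IsStrictFPair G F u f) (hw : OnPathInt (G.deleteEdges F) u f w) :
    (G.deleteEdges F).neighborSet w = G.neighborSet w := by
  have hdeg : (G.neighborSet w).ncard = 2 := hpair.2 w hw
  refine Set.eq_of_subset_of_ncard_le (fun _ h => h.1) ?_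
    (Set.finite_of_ncard_ne_zero (by rw [hdeg]; norm_num))
  rw [hdeg]
  exact (hpair.1.2.2 w hw).ge

lemma IsStrictFPair.not_adj_of_adj {u f : V} {F : Set (Sym2 V)} (hpair : IsStrictFPair G F u f)
    (hT : (G.deleteEdges F).IsAcyclic) (hw₁ : OnPathInt (G.deleteEdges F) u f w₁)
    (hw₂ : OnPathInt (G.deleteEdges F) u f w₂) (hadj : (G.deleteEdges F).Adj w₁ w₂) (z : V)
    (h₁ : G.Adj w₁ z) : ¬ G.Adj w₂ z := by
  classical
  intro h₂
  rw [← mem_neighborSet, ← hpair.neighborSet_deleteEdges_eq hw₁] at h₁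
  rw [← mem_neighborSet, ← hpair.neighborSet_deleteEdges_eq hw₂] at h₂
  exact hT.cliqueFree le_rfl {w₁, w₂, z} (is3Clique_triple_iff.2 ⟨hadj, h₁, h₂⟩)

end Glue

theorem stmt9_general (V : Type) [Fintype V] (G : SimpleGraph V)
    (K : Set V) (F : Set (Sym2 V)) (hF : IsMinFES G F)
    (u f w₁ w₂ : V)
    (hpair : IsStrictFPair G F u f)
    (hw₁ : OnPathInt (G.deleteEdges F) u f w₁)
    (hw₂ : OnPathInt (G.deleteEdges F) u f w₂)
    (hadj : (G.deleteEdges F).Adj w₁ w₂)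
    (hK : (w₁ ∈ K ∧ w₂ ∈ K) ∨ (w₁ ∉ K ∧ w₂ ∉ K)) :
    (∃ S : Set V, K ⊆ S ∧ (G.induce S).IsTree) ↔
    (∃ S' : Set ({x : V // x ≠ w₁ ∧ x ≠ w₂} ⊕ Unit),
        {z | (∃ x, z = Sum.inl x ∧ x.1 ∈ K) ∨ (z = Sum.inr () ∧ w₁ ∈ K)} ⊆ S' ∧
        ((glueGraph G w₁ w₂).induce S').IsTree) := by
  have hG : G.Adj w₁ w₂ := hadj.1
  have hno := hpair.not_adj_of_adj hF.1.2 hw₁ hw₂ hadj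
  have hglue := isEdgeContraction_glueMap hG
  rw [← image_glueMap hK]
  constructor
  · rintro ⟨S, hKS, hS⟩
    by_cases hS₁₂ : w₁ ∈ S ↔ w₂ ∈ S
    · exact ⟨_, Set.image_mono hKS, (hglue.isTree_induce_iff hno hS₁₂).1 hS⟩
    have hK₁₂ : w₁ ∉ K ∧ w₂ ∉ K := by
      have := @hKS w₁
      have := @hKS w₂
      tauto
    obtain ⟨h₁, h₂⟩ | ⟨h₂, h₁⟩ : w₁ ∈ S ∧ w₂ ∉ S ∨ w₂ ∈ S ∧ w₁ ∉ S := by tauto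
    · exact hglue.exists_isTree_of_leaf hS h₁ h₂ rfl
        (neighborSet_inter_subsingleton (hpair.2 w₁ hw₁) hG h₂)
        (Set.subset_sdiff_singleton hKS hK₁₂.1)
    · exact hglue.exists_isTree_of_leaf hS h₂ h₁ Sym2.eq_swap
        (neighborSet_inter_subsingleton (hpair.2 w₂ hw₂) hG.symm h₁)
        (Set.subset_sdiff_singleton hKS hK₁₂.2)
  · rintro ⟨S', hKS', hS'⟩
    refine ⟨glueMap w₁ w₂ ⁻¹' S', (Set.subset_preimage_image _ _).trans (Set.preimage_mono hKS'),
      (hglue.isTree_induce_iff hno ?_).2 ?_⟩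
    · rw [Set.mem_preimage, Set.mem_preimage, hglue.map_eq]
    · rwa [Set.image_preimage_eq _ hglue.surjective]

/-- Safeness of Reduction Rule 6 (glueing): if `w₁, w₂` are adjacent internal
vertices of the path of a strict `F`-pair `u, f`, both terminals or both
non-terminals, then `(G, K)` has an induced tree containing all terminals iff
the glued instance `(G', K')` has one, where `w*` is a terminal of `K'` iff
`w₁, w₂ ∈ K`. -/
theorem stmt9 (V : Type) [Fintype V] (G : SimpleGraph V) (hconn : G.Connected)
    (K : Set V) (F : Set (Sym2 V)) (hF : IsMinFES G F)
    (u f w₁ w₂ : V)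
    (hpair : IsStrictFPair G F u f)
    (hw₁ : OnPathInt (G.deleteEdges F) u f w₁)
    (hw₂ : OnPathInt (G.deleteEdges F) u f w₂)
    (hadj : (G.deleteEdges F).Adj w₁ w₂)
    (hK : (w₁ ∈ K ∧ w₂ ∈ K) ∨ (w₁ ∉ K ∧ w₂ ∉ K)) :
    (∃ S : Set V, K ⊆ S ∧ (G.induce S).IsTree) ↔
    (∃ S' : Set ({x : V // x ≠ w₁ ∧ x ≠ w₂} ⊕ Unit),
        {z | (∃ x, z = Sum.inl x ∧ x.1 ∈ K) ∨ (z = Sum.inr () ∧ w₁ ∈ K)} ⊆ S' ∧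
        ((glueGraph G w₁ w₂).induce S').IsTree) :=
  stmt9_general V G K F hF u f w₁ w₂ hpair hw₁ hw₂ hadj hK
end

section
/- Let H_1, …, H_t be pairwise vertex-disjoint graphs, let K_i ⊆ V(H_i) be a set of terminals of H_i, and for each i let v_1(i) and v_2(i) be two distinct vertices of K_i. Let G be the graph with vertex set ⋃_i V(H_i) and edge set ⋃_i E(H_i) together with the edges v_2(i)v_1(i+1) for every i ∈ {1, …, t−1}, and let K = ⋃_i K_i. Then there exists a set S with K ⊆ S ⊆ V(G) such that G[S] is a tree if and only if for every i ∈ {1, …, t} there exists a set S_i with K_i ⊆ S_i ⊆ V(H_i) such that H_i[S_i] is a tree. -/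
/-!
The edge `v₂(n-1) v₁(n)` is the only edge of the chain graph between the instances before `n`
and the others, so a trail that starts and ends in the same instance never leaves it. Hence the
paths and cycles of an induced subgraph `G[S]` between vertices of the `i`-th instance are those
of the slice `H_i[S_i]`: a tree `G[S]` restricts to a tree on every slice, and conversely trees
on the slices, linked by the edges `v₂(i) v₁(i+1)`, form a connected induced subgraph each of
whose cycles would lie in a single slice.
-/

open SimpleGraph

/-- The chained disjoint union of the graphs `H i`: the disjoint union of the
`H i` together with, for each `i ∈ {1, …, t-1}`, an edge joining the
designated vertex `v₂ i` of `H i` to the designated vertex `v₁ (i+1)` of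
`H (i+1)`. -/
def chainGraph {t : ℕ} (V : Fin t → Type) (H : ∀ i, SimpleGraph (V i))
    (v₁ v₂ : ∀ i, V i) : SimpleGraph (Σ i, V i) :=
  SimpleGraph.fromRel (fun a b =>
    (∃ h : a.1 = b.1, (H b.1).Adj (h ▸ a.2) b.2) ∨
    ((a.1 : ℕ) + 1 = (b.1 : ℕ) ∧ a.2 = v₂ a.1 ∧ b.2 = v₁ b.1))

namespace SimpleGraph

variable {W : Type*} {G : SimpleGraph W}

def AtMostOneEdgeOut (G : SimpleGraph W) (A : Set W) : Prop :=
  ∀ ⦃a b a' b'⦄, G.Adj a b → a ∈ A → b ∉ A → G.Adj a' b' → a' ∈ A → b' ∉ A → a = a' ∧ b = b'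

-- Trails rather than paths, so that the condition also confines cycles.
def IsTrailConvex (G : SimpleGraph W) (s : Set W) : Prop :=
  ∀ ⦃u v⦄ (p : G.Walk u v), p.IsTrail → u ∈ s → v ∈ s → ∀ z ∈ p.support, z ∈ s

namespace AtMostOneEdgeOut

variable {A : Set W}

lemma compl (h : G.AtMostOneEdgeOut A) : G.AtMostOneEdgeOut Aᶜ := by
  intro a b a' b' hab ha hb hab' ha' hb'
  rw [Set.notMem_compl_iff] at hb hb'
  exact (h hab.symm hb ha hab'.symm hb' ha').symm

lemma induce (h : G.AtMostOneEdgeOut A) (S : Set W) :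
    (G.induce S).AtMostOneEdgeOut (Subtype.val ⁻¹' A) := by
  intro a b a' b' hab ha hb hab' ha' hb'
  obtain ⟨haa, hbb⟩ := h hab ha hb hab' ha' hb'
  exact ⟨Subtype.ext haa, Subtype.ext hbb⟩

/-- A trail that left `A` would have to come back through the only edge leaving `A`,
which it has already used. -/
lemma isTrailConvex (h : G.AtMostOneEdgeOut A) : G.IsTrailConvex A := by
  intro u v p
  induction p with
  | nil => simp_all
  | @cons x m y hxm q ih =>
    intro hp hx hy z hz
    rw [Walk.isTrail_cons] at hp
    by_cases hm : m ∈ A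
    · rw [Walk.support_cons, List.mem_cons] at hz
      rcases hz with rfl | hz
      · exact hx
      · exact ih hp.1 hm hy z hz
    · obtain ⟨d, hd, hd₁, hd₂⟩ := q.exists_boundary_dart Aᶜ hm (by simpa using hy)
      obtain ⟨rfl, rfl⟩ := h d.adj.symm (by simpa using hd₂) hd₁ hxm hx hm
      exact absurd (Sym2.eq_swap ▸ List.mem_map_of_mem hd) hp.2

end AtMostOneEdgeOut

namespace IsTrailConvex

variable {s : Set W}

lemma preconnected_induce (hs : G.IsTrailConvex s) (hG : G.Preconnected) :
    (G.induce s).Preconnected := by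
  classical
  rintro ⟨x, hx⟩ ⟨y, hy⟩
  obtain ⟨p⟩ := hG x y
  exact ⟨p.toPath.1.induce s (hs _ p.toPath.2.isTrail hx hy)⟩

lemma isTree_induce (hs : G.IsTrailConvex s) (hG : G.IsTree) (hne : s.Nonempty) :
    (G.induce s).IsTree :=
  have := hne.to_subtype
  ⟨⟨hs.preconnected_induce hG.connected.preconnected⟩, hG.isAcyclic.induce s⟩

lemma not_isCycle (hs : G.IsTrailConvex s) (hacyc : (G.induce s).IsAcyclic) {u : W}
    (hu : u ∈ s) (c : G.Walk u u) : ¬ c.IsCycle := by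
  intro hc
  refine hacyc (c.induce s (hs c hc.isTrail hu hu)) ?_
  rwa [← Walk.isCycle_map_iff_of_injective (f := (Embedding.induce (G := G) s).toHom)
    Subtype.val_injective, Walk.map_induce]

end IsTrailConvex

end SimpleGraph

lemma Sigma.eq_of_fst_eq_of_snd_eq_apply {ι : Type*} {β : ι → Type*} (w : ∀ i, β i)
    {a b : Sigma β} (h : a.1 = b.1) (ha : a.2 = w a.1) (hb : b.2 = w b.1) : a = b := by
  obtain ⟨i, x⟩ := a
  obtain ⟨j, y⟩ := b
  dsimp only at h ha hb
  subst h ha hb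
  rfl

section chainGraph

variable {t : ℕ} {V : Fin t → Type} {H : ∀ i, SimpleGraph (V i)} {v₁ v₂ : ∀ i, V i}

lemma chainGraph_adj_mk {i : Fin t} {x y : V i} :
    (chainGraph V H v₁ v₂).Adj ⟨i, x⟩ ⟨i, y⟩ ↔ (H i).Adj x y := by
  simp only [chainGraph, fromRel_adj, ne_eq, Sigma.mk.injEq, heq_eq_eq, true_and,
    exists_const, add_eq_left, one_ne_zero, false_and, or_false]
  exact ⟨fun h => h.2.elim id Adj.symm, fun h => ⟨h.ne, .inl h⟩⟩

lemma chainGraph_adj_of_succ {i j : Fin t} (hij : (i : ℕ) + 1 = j) :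
    (chainGraph V H v₁ v₂).Adj ⟨i, v₂ i⟩ ⟨j, v₁ j⟩ := by
  rw [chainGraph, fromRel_adj]
  refine ⟨fun h => ?_, Or.inl (Or.inr ⟨hij, rfl, rfl⟩)⟩
  have := congrArg (fun a => (a.1 : ℕ)) h
  simp_all

lemma chainGraph_adj_of_fst_lt {a b : Σ i, V i} (h : (chainGraph V H v₁ v₂).Adj a b)
    (hab : (a.1 : ℕ) < b.1) : (a.1 : ℕ) + 1 = b.1 ∧ a.2 = v₂ a.1 ∧ b.2 = v₁ b.1 := by
  rw [chainGraph, fromRel_adj] at h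
  obtain ⟨-, (⟨heq, -⟩ | h) | (⟨heq, -⟩ | h)⟩ := h
  · rw [heq] at hab; omega
  · exact h
  · rw [heq] at hab; omega
  · omega

lemma chainGraph_atMostOneEdgeOut (n : ℕ) :
    (chainGraph V H v₁ v₂).AtMostOneEdgeOut {a | (a.1 : ℕ) < n} := by
  intro a b a' b' h ha hb h' ha' hb'
  simp only [Set.mem_ofPred_eq, not_lt] at ha hb ha' hb'
  obtain ⟨hs, ha₂, hb₂⟩ := chainGraph_adj_of_fst_lt h (by omega)
  obtain ⟨hs', ha₂', hb₂'⟩ := chainGraph_adj_of_fst_lt h' (by omega)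
  exact ⟨Sigma.eq_of_fst_eq_of_snd_eq_apply v₂ (Fin.ext (by omega)) ha₂ ha₂',
    Sigma.eq_of_fst_eq_of_snd_eq_apply v₁ (Fin.ext (by omega)) hb₂ hb₂'⟩

lemma isTrailConvex_chainGraph_induce_level (S : Set (Σ i, V i)) (i : Fin t) :
    ((chainGraph V H v₁ v₂).induce S).IsTrailConvex {u | u.1.1 = i} := by
  intro u v p hp hu hv z hz
  have hle := ((chainGraph_atMostOneEdgeOut (i + 1)).induce S).isTrailConvex p hp
    (by simp_all) (by simp_all) z hz
  have hge := ((chainGraph_atMostOneEdgeOut i).compl.induce S).isTrailConvex p hp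
    (by simp_all) (by simp_all) z hz
  simp only [Set.mem_preimage, Set.mem_ofPred_eq, Set.mem_compl_iff, not_lt] at hle hge ⊢
  exact Fin.ext (by omega)

variable (v₁ v₂) in
def sliceEmbedding (S : Set (Σ i, V i)) (i : Fin t) :
    (H i).induce (Sigma.mk i ⁻¹' S) ↪g (chainGraph V H v₁ v₂).induce S where
  toFun x := ⟨⟨i, x⟩, x.2⟩
  inj' _ _ h := Subtype.ext (sigma_mk_injective (congrArg Subtype.val h))
  map_rel_iff' := chainGraph_adj_mk

lemma range_sliceEmbedding (S : Set (Σ i, V i)) (i : Fin t) :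
    Set.range (sliceEmbedding (H := H) v₁ v₂ S i) = {u | u.1.1 = i} := by
  ext ⟨⟨j, x⟩, hx⟩
  constructor
  · rintro ⟨y, hy⟩
    rw [← hy]
    rfl
  · rintro rfl
    exact ⟨⟨x, hx⟩, rfl⟩

lemma chainGraph_induce_preconnected {S : Set (Σ i, V i)}
    (hS : ∀ i, ((H i).induce (Sigma.mk i ⁻¹' S)).Preconnected)
    (h₁ : ∀ i, ⟨i, v₁ i⟩ ∈ S) (h₂ : ∀ i, ⟨i, v₂ i⟩ ∈ S) :
    ((chainGraph V H v₁ v₂).induce S).Preconnected := by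
  let base (i : Fin t) : S := ⟨⟨i, v₁ i⟩, h₁ i⟩
  have reach_base (u : S) : ((chainGraph V H v₁ v₂).induce S).Reachable u (base u.1.1) := by
    obtain ⟨⟨i, x⟩, hx⟩ := u
    exact (hS i ⟨x, hx⟩ ⟨v₁ i, h₁ i⟩).map (sliceEmbedding v₁ v₂ S i).toHom
  have reach_succ (i j : Fin t) (hij : (i : ℕ) + 1 = j) :
      ((chainGraph V H v₁ v₂).induce S).Reachable (base i) (base j) :=
    ((hS i ⟨v₁ i, h₁ i⟩ ⟨v₂ i, h₂ i⟩).map (sliceEmbedding v₁ v₂ S i).toHom).trans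
      (Adj.reachable (chainGraph_adj_of_succ hij))
  have reach_add (n : ℕ) : ∀ i j : Fin t, (j : ℕ) = i + n →
      ((chainGraph V H v₁ v₂).induce S).Reachable (base i) (base j) := by
    induction n with
    | zero => intro i j hij; rw [Fin.ext hij]
    | succ n ih =>
      intro i j hij
      exact (ih i ⟨i + n, by omega⟩ rfl).trans (reach_succ _ j (by simp; omega))
  have reach_le {i j : Fin t} (hij : i ≤ j) :
      ((chainGraph V H v₁ v₂).induce S).Reachable (base i) (base j) :=
    reach_add (j - i) i j (by omega)
  intro u v
  refine (reach_base u).trans (Reachable.trans ?_ (reach_base v).symm)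
  rcases le_total u.1.1 v.1.1 with h | h
  · exact reach_le h
  · exact (reach_le h).symm

end chainGraph

theorem stmt11_general (t : ℕ) (ht : 1 ≤ t) (V : Fin t → Type)
    (H : ∀ i, SimpleGraph (V i)) (K : ∀ i, Set (V i))
    (v₁ v₂ : ∀ i, V i)
    (hv₁ : ∀ i, v₁ i ∈ K i) (hv₂ : ∀ i, v₂ i ∈ K i) :
    (∃ S : Set (Σ i, V i),
        {a : Σ i, V i | a.2 ∈ K a.1} ⊆ S ∧
        ((chainGraph V H v₁ v₂).induce S).IsTree) ↔
    (∀ i, ∃ Si : Set (V i), K i ⊆ Si ∧ ((H i).induce Si).IsTree) := by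
  constructor
  · rintro ⟨S, hKS, hS⟩ i
    refine ⟨Sigma.mk i ⁻¹' S, fun x hx => hKS hx, ?_⟩
    rw [(sliceEmbedding v₁ v₂ S i).isoInduceRange.isTree_iff, range_sliceEmbedding]
    exact (isTrailConvex_chainGraph_induce_level S i).isTree_induce hS
      ⟨⟨⟨i, v₁ i⟩, hKS (hv₁ i)⟩, rfl⟩
  · intro hK
    choose Si hKSi hSi using hK
    let S : Set (Σ i, V i) := {a | a.2 ∈ Si a.1}
    refine ⟨S, fun a ha => hKSi a.1 ha, ?_, ?_⟩
    · have : Nonempty S := ⟨⟨⟨⟨0, ht⟩, v₁ _⟩, hKSi _ (hv₁ _)⟩⟩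
      exact ⟨chainGraph_induce_preconnected (fun i => (hSi i).connected.preconnected)
        (fun i => hKSi i (hv₁ i)) (fun i => hKSi i (hv₂ i))⟩
    · intro u c hc
      have hacyc := (sliceEmbedding v₁ v₂ S u.1.1).isoInduceRange.isAcyclic_iff.mp
        (hSi u.1.1).isAcyclic
      rw [range_sliceEmbedding] at hacyc
      exact (isTrailConvex_chainGraph_induce_level S u.1.1).not_isCycle hacyc rfl c hc

/-- Correctness of the AND-cross-composition: the chained instance has an
induced tree containing all terminals iff each of the `t` instances has one. -/
theorem stmt11 (t : ℕ) (ht : 1 ≤ t) (V : Fin t → Type) [∀ i, Fintype (V i)]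
    (H : ∀ i, SimpleGraph (V i)) (K : ∀ i, Set (V i))
    (v₁ v₂ : ∀ i, V i)
    (hv₁ : ∀ i, v₁ i ∈ K i) (hv₂ : ∀ i, v₂ i ∈ K i)
    (hne : ∀ i, v₁ i ≠ v₂ i) :
    (∃ S : Set (Σ i, V i),
        {a : Σ i, V i | a.2 ∈ K a.1} ⊆ S ∧
        ((chainGraph V H v₁ v₂).induce S).IsTree) ↔
    (∀ i, ∃ Si : Set (V i), K i ⊆ Si ∧ ((H i).induce Si).IsTree) :=
  stmt11_general t ht V H K v₁ v₂ hv₁ hv₂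
end

section
/- Let G be a graph, let x and s be distinct non-adjacent vertices of G, and let Y ⊆ V(G) be an independent set of G such that the neighborhood of x is exactly Y and every vertex of Y is adjacent to s. Then every set S ⊆ V(G) with x, s ∈ S such that the induced subgraph G[S] is a tree satisfies |S ∩ Y| = 1. -/
/-!
In the induced tree `T = G[S]` the neighbours of `x` are exactly the vertices of `S ∩ Y`, and each
of them is also a neighbour of `s`. Two distinct common neighbours of `x ≠ s` would give two
distinct `x`–`s` paths of length two, so `x` has at most one neighbour in `T`; being a vertex of a
connected graph with at least two vertices, it has at least one.
-/

namespace SimpleGraph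

variable {V : Type*} {G : SimpleGraph V} {u w : V}

lemma IsAcyclic.commonNeighbors_subsingleton (hG : G.IsAcyclic) (huw : u ≠ w) :
    (G.commonNeighbors u w).Subsingleton := by
  have isPath : ∀ y (hu : G.Adj u y) (hw : G.Adj y w), (Walk.cons hu (.cons hw .nil)).IsPath :=
    fun y hu hw => by simp [Walk.isPath_def, hu.ne, hw.ne, huw]
  intro y hy y' hy'
  rw [mem_commonNeighbors] at hy hy'
  have h := congrArg Subtype.val ((hG.subsingleton_path u w).elim
    ⟨_, isPath y hy.1 hy.2.symm⟩ ⟨_, isPath y' hy'.1 hy'.2.symm⟩)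
  simpa using congrArg Walk.snd h

lemma IsTree.neighborSet_ncard_eq_one (hG : G.IsTree) (huw : u ≠ w)
    (hsub : G.neighborSet u ⊆ G.neighborSet w) : (G.neighborSet u).ncard = 1 := by
  have : Nontrivial V := ⟨⟨u, w, huw⟩⟩
  obtain ⟨y, hy⟩ := hG.connected.preconnected.exists_adj_of_nontrivial u
  refine Set.ncard_eq_one.2 ⟨y, Set.eq_singleton_iff_unique_mem.2 ⟨hy, fun z hz => ?_⟩⟩
  exact hG.isAcyclic.commonNeighbors_subsingleton huw ⟨hz, hsub hz⟩ ⟨hy, hsub hy⟩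

end SimpleGraph

theorem stmt14_general (V : Type) (G : SimpleGraph V) (x s : V)
    (hxs : x ≠ s) (Y : Set V)
    (hNx : G.neighborSet x = Y) (hYs : ∀ y ∈ Y, G.Adj y s) :
    ∀ S : Set V, x ∈ S → s ∈ S → (G.induce S).IsTree → (S ∩ Y).ncard = 1 := by
  intro S hx hs hT
  have hSY : S ∩ Y = Subtype.val '' (G.induce S).neighborSet ⟨x, hx⟩ := by
    ext y
    simp [← hNx, and_comm]
  have hsub : (G.induce S).neighborSet ⟨x, hx⟩ ⊆ (G.induce S).neighborSet ⟨s, hs⟩ :=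
    fun y hy => (hYs y (hNx ▸ hy)).symm
  rw [hSY, Set.ncard_image_of_injective _ Subtype.val_injective]
  exact hT.neighborSet_ncard_eq_one (by simpa using hxs) hsub

/-- The instance-selector property: if the neighborhood of `x` is exactly the
independent set `Y`, every vertex of `Y` is adjacent to `s`, and `x, s` are
distinct and non-adjacent, then every induced tree containing both `x` and `s`
contains exactly one vertex of `Y`. -/
theorem stmt14 (V : Type) [Fintype V] (G : SimpleGraph V) (x s : V)
    (hxs : x ≠ s) (hnadj : ¬ G.Adj x s) (Y : Set V)
    (hind : ∀ y ∈ Y, ∀ y' ∈ Y, ¬ G.Adj y y')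
    (hNx : G.neighborSet x = Y) (hYs : ∀ y ∈ Y, G.Adj y s) :
    ∀ S : Set V, x ∈ S → s ∈ S → (G.induce S).IsTree → (S ∩ Y).ncard = 1 :=
  stmt14_general V G x s hxs Y hNx hYs
end
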